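/- arXiv:1204.1687 — 4 statements merged into one kernel-verified Lean document; each statement's English description precedes it below -/
import Mathlib

section
/- Let d ≥ 1 and let β = (β_{ij})_{i+j ≤ 2d} be a real multisequence such that M_d(β) is positive semidefinite and its column relations are generated entirely by X^n = p(X,Y) and Y^m = q(X,Y) via recursiveness and linearity. Then M_d(β) admits a unique RG extension: there is exactly one extension β' = (β'_{ij})_{i+j ≤ 2d+2} of β for which M_{d+1}(β') is an RG extension of M_d(β); moreover, in the columns of this M_{d+1} the relations X^{n+i}Y^{d+1−n−i} = (x^i y^{d+1−n−i} p)(X,Y) for 0 ≤ i ≤ d+1−n and X^{d+1−m−g}Y^{m+g} = (x^{d+1−m−g} y^g q)(X,Y) for 0 ≤ g ≤ d+1−m all hold. -/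
open Finset Matrix

noncomputable section

/-- Monomial indices of degree at most `d` (the monomial `x^i y^j` is the pair `(i,j)`). -/
abbrev Idx (d : ℕ) : Type := {ij : ℕ × ℕ // ij.1 + ij.2 ≤ d}

/-- Monomial indices of degree exactly `e`. -/
abbrev Jdx (e : ℕ) : Type := {ij : ℕ × ℕ // ij.1 + ij.2 = e}

instance (d : ℕ) : Fintype (Idx d) :=
  Fintype.subtype
    ((Finset.range (d + 1) ×ˢ Finset.range (d + 1)).filter fun ij => ij.1 + ij.2 ≤ d)
    (by
      rintro ⟨a, b⟩
      simp only [Finset.mem_filter, Finset.mem_product, Finset.mem_range]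
      omega)

instance (e : ℕ) : Fintype (Jdx e) :=
  Fintype.subtype
    ((Finset.range (e + 1) ×ˢ Finset.range (e + 1)).filter fun ij => ij.1 + ij.2 = e)
    (by
      rintro ⟨a, b⟩
      simp only [Finset.mem_filter, Finset.mem_product, Finset.mem_range]
      omega)

/-- The moment matrix `M_d(β)`: rows and columns are indexed by monomials of degree ≤ d,
with entry in row `(i,j)`, column `(k,l)` equal to `β (i+k) (j+l)`. -/
def momentMatrix (d : ℕ) (β : ℕ → ℕ → ℝ) : Matrix (Idx d) (Idx d) ℝ :=
  Matrix.of fun r c => β (r.1.1 + c.1.1) (r.1.2 + c.1.2)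

/-- The coefficient vector (truncated to degree ≤ d) of the polynomial with
coefficient function `a`. -/
def coeffVec (d : ℕ) (a : ℕ → ℕ → ℝ) : Idx d → ℝ := fun c => a c.1.1 c.1.2

/-- `p(X,Y)`: the linear combination of the columns of `M_d(β)` given by the
coefficient function `a` of `p`. -/
def polyCol (d : ℕ) (β : ℕ → ℕ → ℝ) (a : ℕ → ℕ → ℝ) : Idx d → ℝ :=
  momentMatrix d β *ᵥ coeffVec d a

/-- Coefficient function of the monomial `x^u y^v`. -/
def monoC (u v : ℕ) : ℕ → ℕ → ℝ := fun k l => if k = u ∧ l = v then 1 else 0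

/-- Coefficient function of `x^u y^v * p`, where `p` has coefficient function `a`. -/
def shiftC (u v : ℕ) (a : ℕ → ℕ → ℝ) : ℕ → ℕ → ℝ :=
  fun k l => if u ≤ k ∧ v ≤ l then a (k - u) (l - v) else 0

/-- The polynomial with coefficient function `a` has (total) degree at most `D`. -/
def DegLE (a : ℕ → ℕ → ℝ) (D : ℕ) : Prop := ∀ k l : ℕ, D < k + l → a k l = 0

/-- Coefficient function of the product of two polynomials. -/
def cMul (a b : ℕ → ℕ → ℝ) : ℕ → ℕ → ℝ := fun k l =>
  ∑ i ∈ Finset.range (k + 1), ∑ j ∈ Finset.range (l + 1), a i j * b (k - i) (l - j)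

/-- `M_d(β)` is recursively generated: whenever `p, q, pq` all have degree ≤ d and
`p(X,Y) = 0`, also `(pq)(X,Y) = 0`. -/
def RecursivelyGenerated (d : ℕ) (β : ℕ → ℕ → ℝ) : Prop :=
  ∀ a b : ℕ → ℕ → ℝ, DegLE a d → DegLE b d → DegLE (cMul a b) d →
    polyCol d β a = 0 → polyCol d β (cMul a b) = 0

/-- The column relations of `M_d(β)` are generated entirely by `X^n = p(X,Y)` and
`Y^m = q(X,Y)` via recursiveness and linearity. -/
def GeneratedBy (d n m : ℕ) (β p q : ℕ → ℕ → ℝ) : Prop :=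
  1 ≤ n ∧ n ≤ d ∧ 1 ≤ m ∧ m ≤ d ∧
  DegLE p (n - 1) ∧ DegLE q m ∧ q 0 m = 0 ∧
  polyCol d β (monoC n 0 - p) = 0 ∧
  polyCol d β (monoC 0 m - q) = 0 ∧
  ∀ v : Idx d → ℝ,
    momentMatrix d β *ᵥ v = 0 ↔
      v ∈ Submodule.span ℝ
        {w : Idx d → ℝ |
          (∃ i j : ℕ, n + i + j ≤ d ∧ w = coeffVec d (shiftC i j (monoC n 0 - p))) ∨
          (∃ k l : ℕ, m + k + l ≤ d ∧ w = coeffVec d (shiftC k l (monoC 0 m - q)))}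

/-- `β'` (a multisequence of degree `2d+2` extending `β`) gives an RG extension
`M_{d+1}(β')` of `M_d(β)`: the column space of `B(d+1)` is contained in that of `M_d`,
every column relation of `M_d` extends to `M_{d+1}`, and `M_{d+1}` is recursively
generated. -/
def RGExtension (d : ℕ) (β β' : ℕ → ℕ → ℝ) : Prop :=
  (∀ i j : ℕ, i + j ≤ 2 * d → β' i j = β i j) ∧
  (∀ c : Jdx (d + 1), ∃ v : Idx d → ℝ,
      (fun r : Idx d => β' (r.1.1 + c.1.1) (r.1.2 + c.1.2)) = momentMatrix d β *ᵥ v) ∧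
  (∀ a : ℕ → ℕ → ℝ, DegLE a d → polyCol d β a = 0 → polyCol (d + 1) β' a = 0) ∧
  RecursivelyGenerated (d + 1) β'

/-!
The relations `x^n = p` and `y^m = q` (with `deg p < n` and no `y^m`-term in `q`) rewrite every
monomial, in finitely many steps, into a combination of the `x^u y^v` with `u < n`, `v < m`. Hence
a multisequence whose Riesz functional kills every multiple of `x^n - p` and `y^m - q` up to some
degree is determined up to that degree by its values on these monomials. Recursive generation
forces both relations in every RG extension up to degree `2d + 2`, which gives uniqueness.
For existence, define `β'` by the reduction itself: the two reductions commute, so `L_{β'}` kills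
the whole ideal generated by `x^n - p` and `y^m - q`. It agrees with `β` because `β` already
satisfies the relations up to degree `2d`, and it is an RG extension because every column relation
of `M_d(β)` lies in that ideal, while the columns of `B(d+1)`, being orthogonal to the kernel of
the symmetric matrix `M_d(β)`, lie in its range.
-/

theorem Matrix.IsHermitian.exists_mulVec_eq_of_forall_dotProduct_eq_zero {ι : Type*}
    [Fintype ι] [DecidableEq ι] {A : Matrix ι ι ℝ} (hA : A.IsHermitian) {w : ι → ℝ}
    (hw : ∀ v, A *ᵥ v = 0 → w ⬝ᵥ v = 0) : ∃ u, w = A *ᵥ u := by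
  have hT := (isSymmetric_toEuclideanLin_iff (A := A)).mpr hA
  have hmem : WithLp.toLp 2 w ∈ LinearMap.range A.toEuclideanLin := by
    rw [← Submodule.orthogonal_orthogonal (LinearMap.range _), hT.orthogonal_range]
    intro v hv
    rw [EuclideanSpace.inner_eq_star_dotProduct]
    simpa [dotProduct_comm] using hw _ (congrArg WithLp.ofLp hv)
  obtain ⟨u, hu⟩ := hmem
  exact ⟨WithLp.ofLp u, (congrArg WithLp.ofLp hu).symm⟩

lemma momentMatrix_isHermitian (d : ℕ) (β : ℕ → ℕ → ℝ) : (momentMatrix d β).IsHermitian := by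
  ext r c
  simp [momentMatrix, add_comm]

def triangle (D : ℕ) : Finset (ℕ × ℕ) :=
  (range (D + 1) ×ˢ range (D + 1)).filter fun ij => ij.1 + ij.2 ≤ D

@[simp]
lemma mem_triangle {D : ℕ} {ij : ℕ × ℕ} : ij ∈ triangle D ↔ ij.1 + ij.2 ≤ D := by
  simp only [triangle, mem_filter, mem_product, mem_range]
  omega

lemma triangle_mono {D D' : ℕ} (h : D ≤ D') : triangle D ⊆ triangle D' :=
  fun _ hij => mem_triangle.2 ((mem_triangle.1 hij).trans h)

lemma sum_idx_eq_sum_triangle {M : Type*} [AddCommMonoid M] (D : ℕ) (F : ℕ → ℕ → M) :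
    ∑ c : Idx D, F c.1.1 c.1.2 = ∑ ij ∈ triangle D, F ij.1 ij.2 :=
  (sum_subtype (triangle D) (fun _ => mem_triangle) fun ij => F ij.1 ij.2).symm

lemma DegLE.mono {a : ℕ → ℕ → ℝ} {D D' : ℕ} (h : DegLE a D) (hD : D ≤ D') : DegLE a D' :=
  fun k l hkl => h k l (by omega)

lemma DegLE.sub {a b : ℕ → ℕ → ℝ} {D : ℕ} (ha : DegLE a D) (hb : DegLE b D) :
    DegLE (a - b) D := fun k l hkl => by simp [ha k l hkl, hb k l hkl]

lemma DegLE.shiftC {a : ℕ → ℕ → ℝ} {D : ℕ} (h : DegLE a D) (i j : ℕ) :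
    DegLE (shiftC i j a) (i + j + D) := by
  intro k l hkl
  simp only [_root_.shiftC]
  split_ifs
  · exact h _ _ (by omega)
  · rfl

lemma degLE_monoC (U V : ℕ) : DegLE (monoC U V) (U + V) := by
  intro k l hkl
  simp only [monoC, ite_eq_right_iff, and_imp]
  omega

lemma degLE_monoC_sub {U V D : ℕ} {g : ℕ → ℕ → ℝ} (hg : DegLE g D) (h : U + V ≤ D) :
    DegLE (monoC U V - g) D :=
  ((degLE_monoC U V).mono h).sub hg

lemma eq_sum_monoC {c : ℕ → ℕ → ℝ} {D : ℕ} (hc : DegLE c D) :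
    c = ∑ st ∈ triangle D, c st.1 st.2 • monoC st.1 st.2 := by
  funext k l
  simp only [Finset.sum_apply, Pi.smul_apply, monoC, smul_eq_mul, mul_ite, mul_one, mul_zero]
  by_cases hkl : k + l ≤ D
  · rw [sum_eq_single (k, l)
      (fun st _ hst => if_neg fun h => hst (Prod.ext h.1.symm h.2.symm))
      (fun h => absurd (mem_triangle.2 hkl) h), if_pos ⟨rfl, rfl⟩]
  · rw [hc k l (by omega)]
    exact (sum_eq_zero fun st hst => if_neg fun h => by
      rw [mem_triangle] at hst; omega).symm

lemma shiftC_monoC (i j U V : ℕ) : shiftC i j (monoC U V) = monoC (i + U) (j + V) := by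
  funext k l
  simp only [shiftC, monoC]
  split_ifs <;> first | rfl | omega

lemma shiftC_sum_smul {ι : Type*} (i j : ℕ) (s : Finset ι) (c : ι → ℝ)
    (g : ι → ℕ → ℕ → ℝ) :
    shiftC i j (∑ x ∈ s, c x • g x) = ∑ x ∈ s, c x • shiftC i j (g x) := by
  funext k l
  simp only [shiftC, Finset.sum_apply, Pi.smul_apply, smul_eq_mul]
  split_ifs <;> simp

lemma cMul_sum_smul {ι : Type*} (h : ℕ → ℕ → ℝ) (s : Finset ι) (c : ι → ℝ)
    (g : ι → ℕ → ℕ → ℝ) :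
    cMul h (∑ x ∈ s, c x • g x) = ∑ x ∈ s, c x • cMul h (g x) := by
  funext k l
  simp only [cMul, Finset.sum_apply, Pi.smul_apply, smul_eq_mul, mul_sum]
  conv_rhs => rw [sum_comm]
  refine sum_congr rfl fun a _ => ?_
  conv_rhs => rw [sum_comm]
  exact sum_congr rfl fun b _ => sum_congr rfl fun x _ => by ring

lemma cMul_monoC (h : ℕ → ℕ → ℝ) (i j : ℕ) : cMul h (monoC i j) = shiftC i j h := by
  funext k l
  simp only [cMul, monoC, shiftC, mul_ite, mul_one, mul_zero]
  split_ifs with hij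
  · rw [sum_eq_single (k - i), sum_eq_single (l - j), if_pos (by omega)]
    · intro b hb hbj
      rw [mem_range] at hb
      exact if_neg (by omega)
    · exact fun h => absurd (mem_range.2 (by omega)) h
    · intro a ha hai
      rw [mem_range] at ha
      exact sum_eq_zero fun b _ => if_neg (by omega)
    · exact fun h => absurd (mem_range.2 (by omega)) h
  · refine sum_eq_zero fun a ha => sum_eq_zero fun b hb => if_neg ?_
    rw [mem_range] at ha hb
    omega

lemma cMul_apply_leading {a b : ℕ → ℕ → ℝ} {S T i₀ s₀ : ℕ}
    (ha : DegLE a S) (hb : DegLE b T) (hi₀ : i₀ ≤ S) (hs₀ : s₀ ≤ T)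
    (ha₀ : ∀ i, i₀ < i → a i (S - i) = 0) (hb₀ : ∀ s, s₀ < s → b s (T - s) = 0) :
    cMul a b (i₀ + s₀) (S - i₀ + (T - s₀)) = a i₀ (S - i₀) * b s₀ (T - s₀) := by
  have hterm : ∀ ij ∈ range (i₀ + s₀ + 1) ×ˢ range (S - i₀ + (T - s₀) + 1),
      ij ≠ (i₀, S - i₀) →
        a ij.1 ij.2 * b (i₀ + s₀ - ij.1) (S - i₀ + (T - s₀) - ij.2) = 0 := by
    rintro ⟨i, j⟩ hij hne
    simp only [mem_product, mem_range] at hij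
    rcases lt_trichotomy (i + j) S with hlt | heq | hgt
    · rw [hb _ _ (by omega), mul_zero]
    · rcases lt_trichotomy i i₀ with hi | rfl | hi
      · rw [show S - i₀ + (T - s₀) - j = T - (i₀ + s₀ - i) by omega, hb₀ _ (by omega),
          mul_zero]
      · exact (hne (Prod.ext rfl (by omega))).elim
      · rw [show j = S - i by omega, ha₀ i hi, zero_mul]
    · rw [ha i j hgt, zero_mul]
  rw [cMul, ← sum_product', sum_eq_single_of_mem (i₀, S - i₀) (by simp) hterm]
  congr 2 <;> omega

lemma exists_leading_coeff {a : ℕ → ℕ → ℝ} {D k l : ℕ} (ha : DegLE a D) (hkl : a k l ≠ 0) :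
    ∃ T i₀, k + l ≤ T ∧ i₀ ≤ T ∧ DegLE a T ∧ a i₀ (T - i₀) ≠ 0 ∧
      ∀ i, i₀ < i → a i (T - i) = 0 := by
  classical
  have hkD : k + l ≤ D := by_contra fun h => hkl (ha k l (by omega))
  set T := Nat.findGreatest (fun e => ∃ i ≤ e, a i (e - i) ≠ 0) D
  have hP : ∀ i j, a i j ≠ 0 → ∃ i' ≤ i + j, a i' (i + j - i') ≠ 0 :=
    fun i j h => ⟨i, by omega, by rwa [Nat.add_sub_cancel_left]⟩
  have hkT : k + l ≤ T := Nat.le_findGreatest hkD (hP k l hkl)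
  obtain ⟨i₁, hi₁, hai₁⟩ : ∃ i ≤ T, a i (T - i) ≠ 0 :=
    Nat.findGreatest_spec (P := fun e => ∃ i ≤ e, a i (e - i) ≠ 0) hkD (hP k l hkl)
  have haT : DegLE a T := fun i j hij => by_contra fun h =>
    Nat.findGreatest_is_greatest hij (by_contra fun h' => h (ha i j (by omega))) (hP i j h)
  set i₀ := Nat.findGreatest (fun i => a i (T - i) ≠ 0) T
  refine ⟨T, i₀, hkT, Nat.findGreatest_le T, haT,
    Nat.findGreatest_spec (P := fun i => a i (T - i) ≠ 0) hi₁ hai₁, ?_⟩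
  intro i hi
  by_cases hiT : i ≤ T
  · exact by_contra (Nat.findGreatest_is_greatest hi hiT)
  · exact haT i _ (by omega)

lemma DegLE.of_cMul {a b : ℕ → ℕ → ℝ} {S T K k l : ℕ} (ha : DegLE a S) (hkl : S ≤ k + l)
    (hak : a k l ≠ 0) (hb : DegLE b T) (hab : DegLE (cMul a b) (S + K)) : DegLE b K := by
  intro s t hst
  by_contra hbst
  obtain ⟨S', i₀, hS', hi₀, haS', ha₀, ha₀max⟩ := exists_leading_coeff ha hak
  obtain ⟨T', s₀, hT', hs₀, hbT', hb₀, hb₀max⟩ := exists_leading_coeff hb hbst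
  have hlead := cMul_apply_leading haS' hbT' hi₀ hs₀ ha₀max hb₀max
  rw [hab _ _ (by omega)] at hlead
  exact mul_ne_zero ha₀ hb₀ hlead.symm

/-- `momentSum f D h A B` is `L_f(x^A y^B h)` for a polynomial `h` of degree `≤ D`, where `L_f`
is the Riesz functional `x^i y^j ↦ f i j`. -/
def momentSum (f : ℕ → ℕ → ℝ) (D : ℕ) (h : ℕ → ℕ → ℝ) (A B : ℕ) : ℝ :=
  ∑ ij ∈ triangle D, h ij.1 ij.2 * f (A + ij.1) (B + ij.2)

lemma polyCol_apply (d : ℕ) (f h : ℕ → ℕ → ℝ) (r : Idx d) :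
    polyCol d f h r = momentSum f d h r.1.1 r.1.2 := by
  simp only [polyCol, mulVec, dotProduct, momentMatrix, coeffVec, of_apply, momentSum]
  rw [sum_idx_eq_sum_triangle d fun i j => f (r.1.1 + i) (r.1.2 + j) * h i j]
  exact sum_congr rfl fun _ _ => mul_comm _ _

lemma momentSum_of_degLE (f : ℕ → ℕ → ℝ) {h : ℕ → ℕ → ℝ} {D D' : ℕ} (hh : DegLE h D)
    (hD : D ≤ D') (A B : ℕ) : momentSum f D' h A B = momentSum f D h A B := by
  refine (sum_subset (triangle_mono hD) fun ij _ hij => ?_).symm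
  rw [mem_triangle, not_le] at hij
  rw [hh _ _ hij, zero_mul]

lemma momentSum_sub (f : ℕ → ℕ → ℝ) (D : ℕ) (g h : ℕ → ℕ → ℝ) (A B : ℕ) :
    momentSum f D (g - h) A B = momentSum f D g A B - momentSum f D h A B := by
  simp only [momentSum, Pi.sub_apply, sub_mul, sum_sub_distrib]

lemma momentSum_sub_left (f g : ℕ → ℕ → ℝ) (D : ℕ) (h : ℕ → ℕ → ℝ) (A B : ℕ) :
    momentSum (f - g) D h A B = momentSum f D h A B - momentSum g D h A B := by
  simp only [momentSum, Pi.sub_apply, mul_sub, sum_sub_distrib]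

lemma momentSum_sum_smul {ι : Type*} (f : ℕ → ℕ → ℝ) (D : ℕ) (s : Finset ι) (c : ι → ℝ)
    (g : ι → ℕ → ℕ → ℝ) (A B : ℕ) :
    momentSum f D (∑ x ∈ s, c x • g x) A B = ∑ x ∈ s, c x * momentSum f D (g x) A B := by
  simp only [momentSum, Finset.sum_apply, Pi.smul_apply, smul_eq_mul, sum_mul,
    mul_sum]
  rw [sum_comm]
  exact sum_congr rfl fun _ _ => sum_congr rfl fun _ _ => by ring

lemma momentSum_monoC (f : ℕ → ℕ → ℝ) {D U V : ℕ} (h : U + V ≤ D) (A B : ℕ) :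
    momentSum f D (monoC U V) A B = f (A + U) (B + V) := by
  rw [momentSum, sum_eq_single (U, V)]
  · simp [monoC]
  · intro ij _ hij
    rw [monoC, if_neg fun h => hij (Prod.ext h.1 h.2), zero_mul]
  · exact fun h' => absurd (mem_triangle.2 h) h'

lemma momentSum_shiftC (f : ℕ → ℕ → ℝ) {h : ℕ → ℕ → ℝ} {D D' i j : ℕ} (hh : DegLE h D)
    (hD : i + j + D ≤ D') (A B : ℕ) :
    momentSum f D' (shiftC i j h) A B = momentSum f D h (A + i) (B + j) := by
  conv_lhs => rw [eq_sum_monoC hh, shiftC_sum_smul, momentSum_sum_smul]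
  refine sum_congr rfl fun kl hkl => ?_
  rw [mem_triangle] at hkl
  rw [shiftC_monoC, momentSum_monoC _ (by omega), add_assoc, add_assoc]

lemma momentSum_cMul (f : ℕ → ℕ → ℝ) {h c : ℕ → ℕ → ℝ} {D E : ℕ} (hh : DegLE h D)
    (hc : DegLE c E) (A B : ℕ) :
    momentSum f (D + E) (cMul h c) A B = momentSum (momentSum f D h) E c A B := by
  conv_lhs => rw [eq_sum_monoC hc, cMul_sum_smul, momentSum_sum_smul]
  refine sum_congr rfl fun st hst => ?_
  rw [mem_triangle] at hst
  rw [cMul_monoC, momentSum_shiftC f hh (by omega)]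

lemma momentSum_zero_deg (f h : ℕ → ℕ → ℝ) (A B : ℕ) : momentSum f 0 h A B = h 0 0 * f A B := by
  simp [momentSum, triangle, Finset.filter_singleton]

lemma momentSum_comm (f : ℕ → ℕ → ℝ) (D E : ℕ) (g h : ℕ → ℕ → ℝ) (A B : ℕ) :
    momentSum (momentSum f D g) E h A B = momentSum (momentSum f E h) D g A B := by
  simp only [momentSum, mul_sum]
  rw [sum_comm]
  exact sum_congr rfl fun _ _ => sum_congr rfl fun _ _ => by ring_nf

def momentCol (f : ℕ → ℕ → ℝ) (d A B : ℕ) : Idx d → ℝ := fun r => f (r.1.1 + A) (r.1.2 + B)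

lemma momentSum_eq_momentCol_dotProduct (f : ℕ → ℕ → ℝ) (d : ℕ) (h : ℕ → ℕ → ℝ) (A B : ℕ) :
    momentSum f d h A B = momentCol f d A B ⬝ᵥ coeffVec d h := by
  simp only [dotProduct, momentCol, coeffVec, momentSum]
  rw [sum_idx_eq_sum_triangle d fun i j => f (i + A) (j + B) * h i j]
  exact sum_congr rfl fun _ _ => by rw [mul_comm, add_comm A, add_comm B]

def Annihilates (f G : ℕ → ℕ → ℝ) (D N : ℕ) : Prop :=
  ∀ A B, A + B + D ≤ N → momentSum f D G A B = 0

lemma Annihilates.sub {f g G : ℕ → ℕ → ℝ} {D N : ℕ} (hf : Annihilates f G D N)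
    (hg : Annihilates g G D N) : Annihilates (f - g) G D N := fun A B h => by
  rw [momentSum_sub_left, hf A B h, hg A B h, sub_zero]

lemma annihilates_iff_polyCol_shiftC_eq_zero {f G : ℕ → ℕ → ℝ} {d D : ℕ} (hG : DegLE G D)
    (hD : D ≤ d) :
    Annihilates f G D (2 * d) ↔ ∀ i j, i + j + D ≤ d → polyCol d f (shiftC i j G) = 0 := by
  refine ⟨fun h i j hij => funext fun r => ?_, fun h A B hAB => ?_⟩
  · rw [polyCol_apply, momentSum_shiftC f hG hij]
    exact h _ _ (by have := r.2; omega)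
  · obtain ⟨i, j, hij, hi, hj, hr⟩ : ∃ i j, i + j + D ≤ d ∧ i ≤ A ∧ j ≤ B ∧ A - i + (B - j) ≤ d :=
      ⟨min A (d - D), min B (d - D - min A (d - D)), by omega, by omega, by omega, by omega⟩
    have := congrFun (h i j hij) ⟨(A - i, B - j), hr⟩
    rwa [polyCol_apply, momentSum_shiftC f hG hij, Nat.sub_add_cancel hi,
      Nat.sub_add_cancel hj] at this

lemma eq_zero_of_annihilates {n m N : ℕ} {p q F : ℕ → ℕ → ℝ} (hp : DegLE p (n - 1))
    (hq0 : q 0 m = 0) (hn : 1 ≤ n) (hFp : Annihilates F (monoC n 0 - p) n N)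
    (hFq : Annihilates F (monoC 0 m - q) m N) (hF : ∀ u v, u < n → v < m → F u v = 0) :
    ∀ u v, u + v ≤ N → F u v = 0 := by
  intro u v huv
  -- Induction on `(u + v, v)`, lexicographically: a `q`-step of top degree lowers `v`, since `q`
  -- has no `y^m`-term.
  induction hs : u + v using Nat.strong_induction_on generalizing u v with
  | _ s ihs =>
  induction v using Nat.strong_induction_on generalizing u with
  | _ v ihv =>
  by_cases hu : n ≤ u
  · obtain ⟨A, rfl⟩ := Nat.exists_eq_add_of_le' hu
    have h := hFp A v (by omega)
    rw [momentSum_sub, momentSum_monoC _ (by omega), momentSum_of_degLE F hp (by omega), add_zero,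
      sub_eq_zero] at h
    rw [h]
    refine sum_eq_zero fun ab hab => ?_
    rw [mem_triangle] at hab
    rw [ihs _ (by omega) _ _ (by omega) rfl, mul_zero]
  by_cases hv : m ≤ v
  · obtain ⟨B, rfl⟩ := Nat.exists_eq_add_of_le' hv
    have h := hFq u B (by omega)
    rw [momentSum_sub, momentSum_monoC _ (by omega), add_zero, sub_eq_zero] at h
    rw [h]
    refine sum_eq_zero fun ab hab => ?_
    rw [mem_triangle] at hab
    rcases Nat.lt_or_ge (ab.1 + ab.2) m with hlt | hge
    · rw [ihs _ (by omega) _ _ (by omega) rfl, mul_zero]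
    · rcases Nat.eq_zero_or_pos ab.1 with h0 | hpos
      · rw [show ab = (0, m) from Prod.ext h0 (by omega), hq0, zero_mul]
      · rw [ihv _ (by omega) _ (by omega) (by omega), mul_zero]
  exact hF u v (by omega) (by omega)

lemma eq_of_annihilates {n m N : ℕ} {p q f g : ℕ → ℕ → ℝ} (hp : DegLE p (n - 1))
    (hq0 : q 0 m = 0) (hn : 1 ≤ n) (hfp : Annihilates f (monoC n 0 - p) n N)
    (hgp : Annihilates g (monoC n 0 - p) n N) (hfq : Annihilates f (monoC 0 m - q) m N)
    (hgq : Annihilates g (monoC 0 m - q) m N) (hfg : ∀ u v, u < n → v < m → f u v = g u v)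
    (u v : ℕ) (huv : u + v ≤ N) : f u v = g u v :=
  sub_eq_zero.1 <| eq_zero_of_annihilates hp hq0 hn (hfp.sub hgp) (hfq.sub hgq)
    (fun u v hu hv => sub_eq_zero.2 (hfg u v hu hv)) u v huv

/-- `x^u y^v` is reduced by `x^n = p` while `u ≥ n`, then by `y^m = q` while `v ≥ m`, and `β` is
read off on the remaining monomials. The `y^m`-term of `q`, zero by hypothesis, is skipped so that
the recursion terminates. -/
def recursiveExtension (n m : ℕ) (p q β : ℕ → ℕ → ℝ) (u v : ℕ) : ℝ :=
  if 1 ≤ n ∧ n ≤ u then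
    ∑ ab ∈ (triangle (n - 1)).attach,
      p ab.1.1 ab.1.2 * recursiveExtension n m p q β (u - n + ab.1.1) (v + ab.1.2)
  else if m ≤ v then
    ∑ ab ∈ ((triangle m).erase (0, m)).attach,
      q ab.1.1 ab.1.2 * recursiveExtension n m p q β (u + ab.1.1) (v - m + ab.1.2)
  else β u v
termination_by (u + v, v)
decreasing_by
  all_goals
    have hab := ab.2
    simp only [mem_erase, mem_triangle, ne_eq, Prod.ext_iff] at hab
    rw [Prod.lex_iff]
    omega

section RecursiveExtension

variable {n m : ℕ} {p q β : ℕ → ℕ → ℝ}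

lemma recursiveExtension_add_left (hn : 1 ≤ n) (A B : ℕ) :
    recursiveExtension n m p q β (A + n) B =
      momentSum (recursiveExtension n m p q β) (n - 1) p A B := by
  rw [recursiveExtension, if_pos ⟨hn, by omega⟩, sum_attach (triangle (n - 1)) fun ab =>
    p ab.1 ab.2 * recursiveExtension n m p q β (A + n - n + ab.1) (B + ab.2)]
  simp only [Nat.add_sub_cancel, momentSum]

lemma recursiveExtension_add_right_of_lt (hq0 : q 0 m = 0) {A : ℕ} (hA : A < n) (B : ℕ) :
    recursiveExtension n m p q β A (B + m) =
      momentSum (recursiveExtension n m p q β) m q A B := by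
  rw [recursiveExtension, if_neg (by omega), if_pos (by omega),
    sum_attach ((triangle m).erase (0, m)) fun ab =>
    q ab.1 ab.2 * recursiveExtension n m p q β (A + ab.1) (B + m - m + ab.2),
    sum_erase _ (by rw [hq0, zero_mul])]
  simp only [Nat.add_sub_cancel, momentSum]

lemma recursiveExtension_of_lt {u v : ℕ} (hu : u < n) (hv : v < m) :
    recursiveExtension n m p q β u v = β u v := by
  rw [recursiveExtension, if_neg (by omega), if_neg (by omega)]

/-- The two reductions commute, so the `y^m = q` recursion also holds where `x^n = p` applies. -/
lemma recursiveExtension_add_right (hn : 1 ≤ n) (hq0 : q 0 m = 0) (A B : ℕ) :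
    recursiveExtension n m p q β A (B + m) =
      momentSum (recursiveExtension n m p q β) m q A B := by
  induction A using Nat.strong_induction_on generalizing B with
  | _ A ih =>
  rcases lt_or_ge A n with hA | hA
  · exact recursiveExtension_add_right_of_lt hq0 hA B
  obtain ⟨A, rfl⟩ := Nat.exists_eq_add_of_le' hA
  calc recursiveExtension n m p q β (A + n) (B + m)
      = momentSum (momentSum (recursiveExtension n m p q β) m q) (n - 1) p A B := by
        rw [recursiveExtension_add_left hn]
        refine sum_congr rfl fun ab hab => ?_
        rw [mem_triangle] at hab
        rw [add_right_comm B, ih _ (by omega)]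
    _ = momentSum (momentSum (recursiveExtension n m p q β) (n - 1) p) m q A B :=
        momentSum_comm _ _ _ _ _ _ _
    _ = momentSum (recursiveExtension n m p q β) m q (A + n) B := by
        refine sum_congr rfl fun ab _ => ?_
        rw [← recursiveExtension_add_left hn, add_right_comm A]

lemma momentSum_recursiveExtension_p (hn : 1 ≤ n) (hp : DegLE p (n - 1)) (A B : ℕ) :
    momentSum (recursiveExtension n m p q β) n (monoC n 0 - p) A B = 0 := by
  rw [momentSum_sub, momentSum_monoC _ (by omega), momentSum_of_degLE _ hp (by omega), add_zero,
    recursiveExtension_add_left hn, sub_self]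

lemma momentSum_recursiveExtension_q (hn : 1 ≤ n) (hq0 : q 0 m = 0) (A B : ℕ) :
    momentSum (recursiveExtension n m p q β) m (monoC 0 m - q) A B = 0 := by
  rw [momentSum_sub, momentSum_monoC _ (by omega), add_zero, recursiveExtension_add_right hn hq0,
    sub_self]

end RecursiveExtension

def relationVectors (d D₁ D₂ : ℕ) (G₁ G₂ : ℕ → ℕ → ℝ) : Set (Idx d → ℝ) :=
  {w | (∃ i j, D₁ + i + j ≤ d ∧ w = coeffVec d (shiftC i j G₁)) ∨
    (∃ k l, D₂ + k + l ≤ d ∧ w = coeffVec d (shiftC k l G₂))}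

lemma momentCol_dotProduct_eq_zero_of_mem_span {f G₁ G₂ : ℕ → ℕ → ℝ} {d D₁ D₂ : ℕ}
    (hG₁ : DegLE G₁ D₁) (hG₂ : DegLE G₂ D₂) (h₁ : ∀ A B, momentSum f D₁ G₁ A B = 0)
    (h₂ : ∀ A B, momentSum f D₂ G₂ A B = 0) {w : Idx d → ℝ}
    (hw : w ∈ Submodule.span ℝ (relationVectors d D₁ D₂ G₁ G₂)) (A B : ℕ) :
    momentCol f d A B ⬝ᵥ w = 0 := by
  induction hw using Submodule.span_induction with
  | mem w hw =>
    obtain ⟨i, j, hij, rfl⟩ | ⟨i, j, hij, rfl⟩ := hw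
    · rw [← momentSum_eq_momentCol_dotProduct, momentSum_shiftC f hG₁ (by omega), h₁]
    · rw [← momentSum_eq_momentCol_dotProduct, momentSum_shiftC f hG₂ (by omega), h₂]
  | zero => exact dotProduct_zero _
  | add x y _ _ hx hy => rw [dotProduct_add, hx, hy, add_zero]
  | smul c x _ hx => rw [dotProduct_smul, hx, smul_zero]

section Extension

variable {d : ℕ} {β β' : ℕ → ℕ → ℝ}

lemma polyCol_eq_zero_of_polyCol_succ_eq_zero (hβ' : ∀ i j, i + j ≤ 2 * d → β' i j = β i j)
    {a : ℕ → ℕ → ℝ} (ha : DegLE a d) (h0 : polyCol (d + 1) β' a = 0) : polyCol d β a = 0 := by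
  funext r
  have hr := congrFun h0 ⟨r.1, by omega⟩
  rw [polyCol_apply, momentSum_of_degLE β' ha (Nat.le_succ d)] at hr
  rw [polyCol_apply]
  refine (sum_congr rfl fun ij hij => ?_).trans hr
  rw [mem_triangle] at hij
  dsimp only
  rw [hβ' _ _ (by have := r.2; omega)]

lemma recursivelyGenerated_succ (hβ' : ∀ i j, i + j ≤ 2 * d → β' i j = β i j)
    (hkill : ∀ a, polyCol d β a = 0 → ∀ A B, momentSum β' d a A B = 0) :
    RecursivelyGenerated (d + 1) β' := by
  intro a b ha hb hab h0
  funext r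
  rw [polyCol_apply, Pi.zero_apply]
  by_cases had : DegLE a d
  · have hzero : momentSum β' d a = 0 :=
      funext fun A => funext (hkill a (polyCol_eq_zero_of_polyCol_succ_eq_zero hβ' had h0) A)
    rw [← momentSum_of_degLE β' hab (show d + 1 ≤ d + (d + 1) by omega),
      momentSum_cMul β' had hb, hzero]
    simp [momentSum]
  · obtain ⟨k, l, hkl, hakl⟩ : ∃ k l, d < k + l ∧ a k l ≠ 0 := by
      simpa [DegLE] using had
    have hb0 : DegLE b 0 := ha.of_cMul hkl hakl hb hab
    rw [momentSum_cMul β' ha hb0, momentSum_zero_deg, ← polyCol_apply, h0, Pi.zero_apply, mul_zero]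

theorem rgExtension_of_annihilates {D₁ D₂ : ℕ} {G₁ G₂ : ℕ → ℕ → ℝ} (hG₁ : DegLE G₁ D₁)
    (hG₂ : DegLE G₂ D₂) (hker : ∀ v, momentMatrix d β *ᵥ v = 0 ↔
      v ∈ Submodule.span ℝ (relationVectors d D₁ D₂ G₁ G₂))
    (hβ' : ∀ i j, i + j ≤ 2 * d → β' i j = β i j) (h₁ : ∀ A B, momentSum β' D₁ G₁ A B = 0)
    (h₂ : ∀ A B, momentSum β' D₂ G₂ A B = 0) : RGExtension d β β' := by
  have hkill : ∀ a, polyCol d β a = 0 → ∀ A B, momentSum β' d a A B = 0 := fun a h0 A B => by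
    rw [momentSum_eq_momentCol_dotProduct]
    exact momentCol_dotProduct_eq_zero_of_mem_span hG₁ hG₂ h₁ h₂ ((hker _).1 h0) A B
  refine ⟨hβ', fun c => ?_, fun a ha h0 => funext fun r => ?_, recursivelyGenerated_succ hβ' hkill⟩
  · exact (momentMatrix_isHermitian d β).exists_mulVec_eq_of_forall_dotProduct_eq_zero
      fun v hv => momentCol_dotProduct_eq_zero_of_mem_span hG₁ hG₂ h₁ h₂ ((hker v).1 hv) _ _
  · rw [polyCol_apply, momentSum_of_degLE β' ha (Nat.le_succ d), hkill a h0, Pi.zero_apply]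

lemma annihilates_of_rgExtension {D : ℕ} {G : ℕ → ℕ → ℝ} (hβ' : RGExtension d β β')
    (hG : DegLE G D) (hD : D ≤ d) (h0 : polyCol d β G = 0) : Annihilates β' G D (2 * (d + 1)) := by
  rw [annihilates_iff_polyCol_shiftC_eq_zero hG (by omega)]
  intro i j hij
  rw [← cMul_monoC]
  refine hβ'.2.2.2 G (monoC i j) (hG.mono (by omega)) ((degLE_monoC i j).mono (by omega)) ?_
    (hβ'.2.2.1 G (hG.mono hD) h0)
  rw [cMul_monoC]
  exact (hG.shiftC i j).mono hij

end Extension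

theorem statement0_general (d n m : ℕ) (β p q : ℕ → ℕ → ℝ)
    (hgen : GeneratedBy d n m β p q) :
    (∃ β' : ℕ → ℕ → ℝ,
      RGExtension d β β' ∧
      (∀ i : ℕ, i ≤ d + 1 - n →
        polyCol (d + 1) β' (shiftC i (d + 1 - n - i) (monoC n 0 - p)) = 0) ∧
      (∀ g : ℕ, g ≤ d + 1 - m →
        polyCol (d + 1) β' (shiftC (d + 1 - m - g) g (monoC 0 m - q)) = 0)) ∧
    (∀ β₁ β₂ : ℕ → ℕ → ℝ, RGExtension d β β₁ → RGExtension d β β₂ →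
      ∀ i j : ℕ, i + j ≤ 2 * d + 2 → β₁ i j = β₂ i j) := by
  obtain ⟨hn, hnd, -, hmd, hp, hq, hq0, hP, hQ, hker⟩ := hgen
  have hGp : DegLE (monoC n 0 - p) n := degLE_monoC_sub (hp.mono (by omega)) (by omega)
  have hGq : DegLE (monoC 0 m - q) m := degLE_monoC_sub hq (by omega)
  set ν := recursiveExtension n m p q β
  have hνp : ∀ A B, momentSum ν n (monoC n 0 - p) A B = 0 := momentSum_recursiveExtension_p hn hp
  have hνq : ∀ A B, momentSum ν m (monoC 0 m - q) A B = 0 := momentSum_recursiveExtension_q hn hq0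
  have hβp : Annihilates β (monoC n 0 - p) n (2 * d) :=
    (annihilates_iff_polyCol_shiftC_eq_zero hGp hnd).2 fun i j hij =>
      (hker _).2 (Submodule.subset_span (Or.inl ⟨i, j, by omega, rfl⟩))
  have hβq : Annihilates β (monoC 0 m - q) m (2 * d) :=
    (annihilates_iff_polyCol_shiftC_eq_zero hGq hmd).2 fun i j hij =>
      (hker _).2 (Submodule.subset_span (Or.inr ⟨i, j, by omega, rfl⟩))
  have hνβ : ∀ i j, i + j ≤ 2 * d → ν i j = β i j :=
    eq_of_annihilates hp hq0 hn (fun A B _ => hνp A B) hβp (fun A B _ => hνq A B) hβq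
      fun u v hu hv => recursiveExtension_of_lt hu hv
  refine ⟨⟨ν, rgExtension_of_annihilates hGp hGq hker hνβ hνp hνq, fun i hi => ?_, fun g hg => ?_⟩,
    fun β₁ β₂ h₁ h₂ i j hij => ?_⟩
  · exact (annihilates_iff_polyCol_shiftC_eq_zero hGp (by omega)).1 (fun A B _ => hνp A B) _ _
      (by omega)
  · exact (annihilates_iff_polyCol_shiftC_eq_zero hGq (by omega)).1 (fun A B _ => hνq A B) _ _
      (by omega)
  · exact eq_of_annihilates hp hq0 hn (annihilates_of_rgExtension h₁ hGp hnd hP)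
      (annihilates_of_rgExtension h₂ hGp hnd hP) (annihilates_of_rgExtension h₁ hGq hmd hQ)
      (annihilates_of_rgExtension h₂ hGq hmd hQ)
      (fun u v hu hv => by rw [h₁.1 u v (by omega), h₂.1 u v (by omega)]) i j (by omega)

/-- If `M_d(β)` is positive semidefinite and its column relations are
generated entirely by `X^n = p(X,Y)` and `Y^m = q(X,Y)` via recursiveness and linearity,
then `M_d(β)` admits a unique RG extension `M_{d+1}`, and in its columns the relations
`X^{n+i}Y^{d+1-n-i} = (x^i y^{d+1-n-i} p)(X,Y)` and
`X^{d+1-m-g}Y^{m+g} = (x^{d+1-m-g} y^g q)(X,Y)` all hold. -/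
theorem statement0 (d n m : ℕ) (hd : 1 ≤ d) (β p q : ℕ → ℕ → ℝ)
    (hpsd : (momentMatrix d β).PosSemidef)
    (hgen : GeneratedBy d n m β p q) :
    (∃ β' : ℕ → ℕ → ℝ,
      RGExtension d β β' ∧
      (∀ i : ℕ, i ≤ d + 1 - n →
        polyCol (d + 1) β' (shiftC i (d + 1 - n - i) (monoC n 0 - p)) = 0) ∧
      (∀ g : ℕ, g ≤ d + 1 - m →
        polyCol (d + 1) β' (shiftC (d + 1 - m - g) g (monoC 0 m - q)) = 0)) ∧
    (∀ β₁ β₂ : ℕ → ℕ → ℝ, RGExtension d β β₁ → RGExtension d β β₂ →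
      ∀ i j : ℕ, i + j ≤ 2 * d + 2 → β₁ i j = β₂ i j) :=
  statement0_general d n m β p q hgen
end
end

section
/- Let d ≥ 1 and suppose M_d(β) is positive semidefinite, recursively generated, and its column relations are generated entirely by X^n = p(X,Y) and Y^m = q(X,Y) via recursiveness and linearity. Then there exists a unique real matrix B(d+1), with rows indexed by the monomials of degree ≤ d and columns indexed by the monomials of degree d+1, such that: (a) for every row index (i,j) with i+j ≤ d−1 and every column index (k,l) with k+l = d+1, the ((i,j),(k,l)) entry of B(d+1) equals β_{i+k,j+l}; (b) the block of B(d+1) with rows of degree d is Hankel, i.e., its entries depend only on i+k and j+l; (c) the columns of the augmented matrix (M_d B(d+1)) satisfy every relation (x^a y^b (x^n − p))(X,Y) = 0 and (x^a y^b (y^m − q))(X,Y) = 0 of degree ≤ d+1, and (M_d B(d+1)) is recursively generated for polynomials of degree ≤ d+1; and (d) the column space of B(d+1) is contained in the column space of M_d. -/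
open Finset Matrix

noncomputable section

/-- The `(row (k,l), column (i,j))` entry of the augmented matrix `(M_d  B(d+1))`,
where rows have degree ≤ d and columns degree ≤ d+1 (value 0 outside this range). -/
def augEntry (d : ℕ) (β : ℕ → ℕ → ℝ) (B : Matrix (Idx d) (Jdx (d + 1)) ℝ)
    (k l i j : ℕ) : ℝ :=
  if hr : k + l ≤ d then
    if i + j ≤ d then β (k + i) (l + j)
    else if hc : i + j = d + 1 then B ⟨(k, l), hr⟩ ⟨(i, j), hc⟩
    else 0
  else 0

/-- The column relation `w(X,Y) = 0` holds among the columns of `(M_d  B(d+1))`. -/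
def AugRel (d : ℕ) (β : ℕ → ℕ → ℝ) (B : Matrix (Idx d) (Jdx (d + 1)) ℝ)
    (w : ℕ → ℕ → ℝ) : Prop :=
  ∀ k l : ℕ, k + l ≤ d →
    ∑ c : Idx (d + 1), w c.1.1 c.1.2 * augEntry d β B k l c.1.1 c.1.2 = 0

/-- `(M_d  B(d+1))` is recursively generated for polynomials of degree ≤ d+1. -/
def AugRecGen (d : ℕ) (β : ℕ → ℕ → ℝ) (B : Matrix (Idx d) (Jdx (d + 1)) ℝ) : Prop :=
  ∀ a b : ℕ → ℕ → ℝ, DegLE a (d + 1) → DegLE b (d + 1) → DegLE (cMul a b) (d + 1) →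
    AugRel d β B a → AugRel d β B (cMul a b)

/-!
Write `γ_s` for the unknown moment `β_{s, 2d+1-s}` in the degree-`d` rows of a Hankel block
`B(d+1)`. Read in those rows, `x^n = p` determines `γ_s` for `s ≥ n`, and `y^m = q` determines
`γ_s` for `s < n` from `γ_{s+1}, …, γ_{s+m}`; this downward recursion defines the block and
forces its uniqueness.

For existence both relations must hold for the extended Riesz functional `L` in degree `2d+1`.
The only non-trivial case, `y^m = q` at `s ≥ n`, is the consistency of the two ways of
reducing `L(x^{s-n} y^{2d+1-s-m} p q)` by the old relations. Since the kernel of `M_d` is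
generated by the two relations, `L` then annihilates `x^K y^L r` for every kernel polynomial `r`
with `K + L + deg r ≤ 2d + 1`. This gives recursive generation of `(M_d  B(d+1))` (a leading
monomial argument shows `deg a + deg b ≤ d + 1`) and, `M_d` being symmetric, that the columns of
`B(d+1)`, orthogonal to `ker M_d`, lie in its range.
-/

namespace MomentExtension

section Coefficients

variable {a b : ℕ → ℕ → ℝ}

lemma degLE_mono {D D' : ℕ} (h : DegLE a D) (hD : D ≤ D') : DegLE a D' :=
  fun k l hk => h k l (by omega)

lemma degLE_sub {D : ℕ} (ha : DegLE a D) (hb : DegLE b D) : DegLE (a - b) D := by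
  intro k l hk
  simp [ha k l hk, hb k l hk]

lemma degLE_monoC {u v D : ℕ} (h : u + v ≤ D) : DegLE (monoC u v) D := by
  intro k l hk
  simp only [monoC]
  rw [if_neg (by omega)]

lemma degLE_monoC_sub {u v D : ℕ} (ha : DegLE a D) (h : u + v ≤ D) : DegLE (monoC u v - a) D :=
  degLE_sub (degLE_monoC h) ha

lemma degLE_shiftC {D : ℕ} (h : DegLE a D) (A B : ℕ) : DegLE (shiftC A B a) (A + B + D) := by
  intro k l hk
  simp only [shiftC]
  split_ifs
  · exact h _ _ (by omega)
  · rfl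

lemma cMul_monoC (a : ℕ → ℕ → ℝ) (u v : ℕ) : cMul a (monoC u v) = shiftC u v a := by
  funext k l
  simp only [cMul, monoC, shiftC]
  by_cases h : u ≤ k ∧ v ≤ l
  · rw [if_pos h, sum_eq_single_of_mem (k - u) (mem_range.2 (by omega)),
      sum_eq_single_of_mem (l - v) (mem_range.2 (by omega)), if_pos (by omega), mul_one]
    · intro j hj hjv
      rw [mem_range] at hj
      rw [if_neg (by omega), mul_zero]
    · intro i hi hiu
      rw [mem_range] at hi
      exact sum_eq_zero fun j _ => by rw [if_neg (by omega), mul_zero]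
  · rw [if_neg h]
    refine sum_eq_zero fun i hi => sum_eq_zero fun j hj => ?_
    rw [mem_range] at hi hj
    rw [if_neg (by omega), mul_zero]

end Coefficients

section Pairing

def boxPairing (R : ℕ) (f : ℕ → ℕ → ℝ) : (ℕ → ℕ → ℝ) →ₗ[ℝ] ℝ where
  toFun w := ∑ u ∈ range R, ∑ v ∈ range R, w u v * f u v
  map_add' w w' := by simp only [Pi.add_apply, add_mul, sum_add_distrib]
  map_smul' c w := by
    simp only [Pi.smul_apply, smul_eq_mul, mul_assoc, mul_sum, RingHom.id_apply]

variable {R : ℕ} {f g w : ℕ → ℕ → ℝ}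

lemma boxPairing_apply : boxPairing R f w = ∑ u ∈ range R, ∑ v ∈ range R, w u v * f u v := rfl

lemma boxPairing_monoC {u v : ℕ} (hu : u < R) (hv : v < R) :
    boxPairing R f (monoC u v) = f u v := by
  simp only [boxPairing_apply, monoC, ite_mul, one_mul, zero_mul]
  rw [sum_eq_single_of_mem u (mem_range.2 hu), sum_eq_single_of_mem v (mem_range.2 hv),
    if_pos ⟨rfl, rfl⟩]
  · intro j _ hj
    rw [if_neg (by omega)]
  · intro i _ hi
    exact sum_eq_zero fun j _ => if_neg (by omega)

lemma boxPairing_congr (h : ∀ u v, w u v ≠ 0 → f u v = g u v) :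
    boxPairing R f w = boxPairing R g w := by
  rw [boxPairing_apply, boxPairing_apply]
  refine sum_congr rfl fun u _ => sum_congr rfl fun v _ => ?_
  by_cases hw : w u v = 0
  · simp [hw]
  · rw [h u v hw]

lemma boxPairing_congr_right {w' : ℕ → ℕ → ℝ} (h : ∀ u < R, ∀ v < R, w u v = w' u v) :
    boxPairing R f w = boxPairing R f w' := by
  rw [boxPairing_apply, boxPairing_apply]
  exact sum_congr rfl fun u hu => sum_congr rfl fun v hv => by
    rw [h u (mem_range.1 hu) v (mem_range.1 hv)]

lemma sum_range_eq_of_vanish {D R : ℕ} (hR : D < R) (F : ℕ → ℝ) (hF : ∀ u, D < u → F u = 0) :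
    ∑ u ∈ range R, F u = ∑ u ∈ range (D + 1), F u :=
  (sum_subset (range_subset_range.2 (by omega)) fun u _ hu =>
    hF u (by simpa using hu)).symm

lemma sum_box_eq_of_degLE {D R₁ R₂ : ℕ} (hw : DegLE w D) (h₁ : D < R₁) (h₂ : D < R₂) :
    ∑ u ∈ range R₁, ∑ v ∈ range R₂, w u v * f u v
      = ∑ u ∈ range (D + 1), ∑ v ∈ range (D + 1), w u v * f u v := by
  rw [sum_range_eq_of_vanish h₁ _ fun u hu =>
    sum_eq_zero fun v _ => by rw [hw u v (by omega), zero_mul]]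
  exact sum_congr rfl fun u _ => sum_range_eq_of_vanish h₂ _ fun v hv => by
    rw [hw u v (by omega), zero_mul]

lemma boxPairing_eq_of_degLE {D R' : ℕ} (hw : DegLE w D) (hR : D < R) (hR' : D < R') :
    boxPairing R f w = boxPairing R' f w := by
  simp only [boxPairing_apply, sum_box_eq_of_degLE hw hR hR, sum_box_eq_of_degLE hw hR' hR']

lemma sum_range_eq_sum_shift {A R : ℕ} (hA : A ≤ R) (F : ℕ → ℝ) (hF : ∀ u < A, F u = 0) :
    ∑ u ∈ range R, F u = ∑ u ∈ range (R - A), F (A + u) := by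
  rw [← sum_range_add_sum_Ico _ hA, sum_eq_zero fun u hu => hF u (mem_range.1 hu), zero_add,
    sum_Ico_eq_sum_range]

lemma boxPairing_shiftC {A B D : ℕ} (hw : DegLE w D) (h : A + B + D < R) :
    boxPairing R f (shiftC A B w) = boxPairing R (fun u v => f (A + u) (B + v)) w := by
  simp only [boxPairing_apply, shiftC, ite_mul, zero_mul]
  rw [sum_range_eq_sum_shift (A := A) (by omega) _ fun u hu =>
    sum_eq_zero fun v _ => if_neg (by omega)]
  simp only [Nat.le_add_right, true_and, Nat.add_sub_cancel_left]
  have inner : ∀ u, ∑ x ∈ range R, (if B ≤ x then w u (x - B) * f (A + u) x else 0)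
      = ∑ v ∈ range (R - B), w u v * f (A + u) (B + v) := fun u => by
    rw [sum_range_eq_sum_shift (A := B) (by omega) _ fun v hv => if_neg (by omega)]
    simp only [Nat.le_add_right, if_true, Nat.add_sub_cancel_left]
  simp only [inner]
  rw [sum_box_eq_of_degLE (f := fun u v => f (A + u) (B + v)) hw (by omega) (by omega),
    sum_box_eq_of_degLE (R₁ := R) (R₂ := R) hw (by omega) (by omega)]

lemma sum_idx_eq_boxPairing {D : ℕ} (hw : DegLE w D) :
    ∑ c : Idx D, w c.1.1 c.1.2 * f c.1.1 c.1.2 = boxPairing (D + 1) f w := by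
  rw [← sum_subtype ((range (D + 1) ×ˢ range (D + 1)).filter fun ij => ij.1 + ij.2 ≤ D)
      (fun x => by simp only [mem_filter, mem_product, mem_range]; omega)
      (fun ij => w ij.1 ij.2 * f ij.1 ij.2), sum_filter, sum_product]
  refine sum_congr rfl fun u _ => sum_congr rfl fun v _ => ?_
  split_ifs with h
  · rfl
  · rw [hw u v (by omega), zero_mul]

lemma sum_comm4 (s t : Finset ℕ) (F : ℕ → ℕ → ℕ → ℕ → ℝ) :
    ∑ x ∈ s, ∑ y ∈ s, ∑ u ∈ t, ∑ v ∈ t, F x y u v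
      = ∑ u ∈ t, ∑ v ∈ t, ∑ x ∈ s, ∑ y ∈ s, F x y u v := by
  calc _ = ∑ x ∈ s, ∑ u ∈ t, ∑ y ∈ s, ∑ v ∈ t, F x y u v := sum_congr rfl fun _ _ => sum_comm
    _ = ∑ u ∈ t, ∑ x ∈ s, ∑ v ∈ t, ∑ y ∈ s, F x y u v := by
      rw [sum_comm]
      exact sum_congr rfl fun _ _ => sum_congr rfl fun _ _ => sum_comm
    _ = _ := sum_congr rfl fun _ _ => sum_comm

end Pairing

section Riesz

/- `riesz R μ K L w = L_μ(x^K y^L w)` for the Riesz functional `L_μ : x^i y^j ↦ μ i j`,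
provided the coefficients of `w` are supported in `[0, R)²`. -/
def riesz (R : ℕ) (μ : ℕ → ℕ → ℝ) (K L : ℕ) : (ℕ → ℕ → ℝ) →ₗ[ℝ] ℝ :=
  boxPairing R fun u v => μ (K + u) (L + v)

variable {R K L : ℕ} {μ ν w : ℕ → ℕ → ℝ}

lemma riesz_apply : riesz R μ K L w = boxPairing R (fun u v => μ (K + u) (L + v)) w := rfl

lemma riesz_monoC {u v : ℕ} (hu : u < R) (hv : v < R) :
    riesz R μ K L (monoC u v) = μ (K + u) (L + v) :=
  boxPairing_monoC hu hv

lemma riesz_shiftC {A B D : ℕ} (hw : DegLE w D) (h : A + B + D < R) :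
    riesz R μ K L (shiftC A B w) = riesz R μ (K + A) (L + B) w := by
  simp only [riesz_apply, boxPairing_shiftC hw h, add_assoc]

lemma riesz_congr (h : ∀ u v, w u v ≠ 0 → μ (K + u) (L + v) = ν (K + u) (L + v)) :
    riesz R μ K L w = riesz R ν K L w :=
  boxPairing_congr h

lemma boxPairing_riesz_comm (R : ℕ) (μ : ℕ → ℕ → ℝ) (K L : ℕ) (p q : ℕ → ℕ → ℝ) :
    boxPairing R (fun u v => riesz R μ (K + u) (L + v) p) q
      = boxPairing R (fun a b => riesz R μ (K + a) (L + b) q) p := by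
  simp only [riesz_apply, boxPairing_apply, mul_sum]
  rw [sum_comm4]
  refine sum_congr rfl fun a _ => sum_congr rfl fun b _ =>
    sum_congr rfl fun u _ => sum_congr rfl fun v _ => ?_
  rw [add_right_comm K u a, add_right_comm L v b]
  ring

variable {d : ℕ} {β a : ℕ → ℕ → ℝ}

lemma polyCol_apply (ha : DegLE a d) {k l : ℕ} (h : k + l ≤ d) :
    polyCol d β a ⟨(k, l), h⟩ = riesz (d + 2) β k l a := by
  have : polyCol d β a ⟨(k, l), h⟩ = ∑ c : Idx d, a c.1.1 c.1.2 * β (k + c.1.1) (l + c.1.2) :=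
    sum_congr rfl fun c _ => mul_comm _ _
  rw [this, sum_idx_eq_boxPairing (f := fun u v => β (k + u) (l + v)) ha,
    boxPairing_eq_of_degLE ha (by omega) (by omega : d < d + 2)]
  rfl

lemma polyCol_shiftC_eq_zero (hrg : RecursivelyGenerated d β) {e : ℕ} (ha : DegLE a e)
    (h0 : polyCol d β a = 0) {A B : ℕ} (h : A + B + e ≤ d) : polyCol d β (shiftC A B a) = 0 := by
  rw [← cMul_monoC]
  refine hrg a (monoC A B) (degLE_mono ha (by omega)) (degLE_monoC (by omega)) ?_ h0
  rw [cMul_monoC]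
  exact degLE_mono (degLE_shiftC ha A B) h

lemma riesz_eq_zero_of_polyCol_eq_zero (hrg : RecursivelyGenerated d β) {e : ℕ}
    (ha : DegLE a e) (he : e ≤ d) (h0 : polyCol d β a = 0) (h : K + L + e ≤ 2 * d) :
    riesz (d + 2) β K L a = 0 := by
  obtain ⟨A, B, K₀, L₀, rfl, rfl, hAB, hKL⟩ :
      ∃ A B K₀ L₀, K = K₀ + A ∧ L = L₀ + B ∧ A + B + e ≤ d ∧ K₀ + L₀ ≤ d :=
    ⟨min K (d - e), min L (d - e - min K (d - e)), K - min K (d - e),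
      L - min L (d - e - min K (d - e)), by omega, by omega, by omega, by omega⟩
  rw [← riesz_shiftC ha (by omega), ← polyCol_apply (degLE_mono (degLE_shiftC ha A B) hAB) hKL,
    polyCol_shiftC_eq_zero hrg ha h0 hAB, Pi.zero_apply]

lemma moment_eq_riesz_of_relation (hrg : RecursivelyGenerated d β) {a₀ b₀ : ℕ}
    {r : ℕ → ℕ → ℝ} (hr : DegLE r (a₀ + b₀)) (hd : a₀ + b₀ ≤ d)
    (hrel : polyCol d β (monoC a₀ b₀ - r) = 0) (h : K + L + (a₀ + b₀) ≤ 2 * d) :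
    β (K + a₀) (L + b₀) = riesz (d + 2) β K L r := by
  have h0 := riesz_eq_zero_of_polyCol_eq_zero hrg (degLE_monoC_sub hr le_rfl) hd hrel h
  rwa [map_sub, riesz_monoC (by omega) (by omega), sub_eq_zero] at h0

end Riesz

section Moments

variable (d n m : ℕ) (β p q : ℕ → ℕ → ℝ)

/- `topMoment … s` is the new moment `β_{s, 2d+1-s}`. For `s ≥ n` it is forced by `x^n = p`
applied to `x^{s-n} y^{2d+1-s}`; for `s < n` by `y^m = q` applied to `x^s y^{2d+1-m-s}`, whose
top-degree terms are the moments `β_{s+u, 2d+1-s-u}` with `u ≥ 1`, since `q` has no `y^m` term. -/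
def topMoment (s : ℕ) : ℝ :=
  if n ≤ s then boxPairing (d + 2) (fun u v => β (s - n + u) (2 * d + 1 - s + v)) p
  else boxPairing (d + 2) (fun u v =>
      if u + v < m then β (s + u) (2 * d + 1 - m - s + v)
      else if 0 < u then topMoment (s + u) else 0) q
termination_by n - s

def extMoment (a b : ℕ) : ℝ :=
  if a + b ≤ 2 * d then β a b else if a + b = 2 * d + 1 then topMoment d n m β p q a else 0

def extBlock : Matrix (Idx d) (Jdx (d + 1)) ℝ :=
  of fun r c => extMoment d n m β p q (r.1.1 + c.1.1) (r.1.2 + c.1.2)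

variable {d n m β p q}

lemma topMoment_of_le {s : ℕ} (h : n ≤ s) :
    topMoment d n m β p q s =
      boxPairing (d + 2) (fun u v => β (s - n + u) (2 * d + 1 - s + v)) p := by
  rw [topMoment, if_pos h]

lemma topMoment_of_lt {s : ℕ} (h : s < n) :
    topMoment d n m β p q s = boxPairing (d + 2) (fun u v =>
      if u + v < m then β (s + u) (2 * d + 1 - m - s + v)
      else if 0 < u then topMoment d n m β p q (s + u) else 0) q := by
  rw [topMoment, if_neg (by omega)]

lemma extMoment_of_le {a b : ℕ} (h : a + b ≤ 2 * d) : extMoment d n m β p q a b = β a b :=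
  if_pos h

lemma extMoment_of_eq {a b : ℕ} (h : a + b = 2 * d + 1) :
    extMoment d n m β p q a b = topMoment d n m β p q a := by
  rw [extMoment, if_neg (by omega), if_pos h]

lemma riesz_extMoment_of_le {R K L e : ℕ} {w : ℕ → ℕ → ℝ} (hw : DegLE w e)
    (h : K + L + e ≤ 2 * d) : riesz R (extMoment d n m β p q) K L w = riesz R β K L w :=
  riesz_congr fun u v hne => extMoment_of_le (by
    by_contra hc
    exact hne (hw u v (by omega)))

lemma riesz_extMoment_relX (hn : 1 ≤ n) (hnd : n ≤ d) (hp : DegLE p (n - 1))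
    (hrg : RecursivelyGenerated d β) (hrel : polyCol d β (monoC n 0 - p) = 0) {K L : ℕ}
    (h : K + L + n ≤ 2 * d + 1) :
    riesz (d + 2) (extMoment d n m β p q) K L (monoC n 0 - p) = 0 := by
  have hr : DegLE (monoC n 0 - p) n := degLE_monoC_sub (degLE_mono hp (by omega)) (by omega)
  rcases Nat.lt_or_ge (K + L + n) (2 * d + 1) with hlt | htop
  · rw [riesz_extMoment_of_le hr (by omega)]
    exact riesz_eq_zero_of_polyCol_eq_zero hrg hr hnd hrel (by omega)
  · rw [map_sub, riesz_monoC (by omega) (by omega), extMoment_of_eq (by omega),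
      topMoment_of_le (by omega), riesz_extMoment_of_le hp (by omega), sub_eq_zero]
    refine boxPairing_congr fun u v _ => ?_
    congr 2 <;> omega

lemma topMoment_eq_riesz_of_lt (hq : DegLE q m) (hq0 : q 0 m = 0) {K L : ℕ} (hK : K < n)
    (hKL : K + L + m = 2 * d + 1) :
    topMoment d n m β p q K = riesz (d + 2) (extMoment d n m β p q) K L q := by
  rw [topMoment_of_lt hK, riesz_apply]
  refine boxPairing_congr fun u v hne => ?_
  have huv : u + v ≤ m := by
    by_contra hc
    exact hne (hq u v (by omega))
  split_ifs with h₁ h₂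
  · rw [extMoment_of_le (by omega)]
    congr 1
    omega
  · rw [extMoment_of_eq (by omega)]
  · obtain rfl : u = 0 := by omega
    obtain rfl : v = m := by omega
    exact absurd hq0 hne

/- Both sides are reduced, by `x^n = p` and then `y^m = q` in degree `≤ 2d`, to
`L(x^{K-n} y^L p q)`. -/
lemma topMoment_eq_riesz_of_le (hn : 1 ≤ n) (hnd : n ≤ d) (hmd : m ≤ d) (hp : DegLE p (n - 1))
    (hq : DegLE q m) (hrg : RecursivelyGenerated d β) (hrelX : polyCol d β (monoC n 0 - p) = 0)
    (hrelY : polyCol d β (monoC 0 m - q) = 0) {K L : ℕ} (hK : n ≤ K)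
    (hKL : K + L + m = 2 * d + 1) :
    topMoment d n m β p q K = riesz (d + 2) (extMoment d n m β p q) K L q := by
  calc topMoment d n m β p q K
      = boxPairing (d + 2) (fun a b => β (K - n + a) (L + b + m)) p := by
        rw [topMoment_of_le hK]
        refine boxPairing_congr fun a b _ => ?_
        congr 1
        omega
    _ = boxPairing (d + 2) (fun a b => riesz (d + 2) β (K - n + a) (L + b) q) p := by
        refine boxPairing_congr fun a b hne => moment_eq_riesz_of_relation (K := K - n + a)
          (L := L + b) hrg (by simpa using hq) (by omega) hrelY ?_
        by_contra hc
        exact hne (hp a b (by omega))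
    _ = boxPairing (d + 2) (fun u v => riesz (d + 2) β (K - n + u) (L + v) p) q :=
        (boxPairing_riesz_comm _ _ _ _ _ _).symm
    _ = riesz (d + 2) (extMoment d n m β p q) K L q := by
        refine boxPairing_congr fun u v hne => ?_
        have huv : u + v ≤ m := by
          by_contra hc
          exact hne (hq u v (by omega))
        rcases Nat.lt_or_ge (u + v) m with hlt | hge
        · rw [extMoment_of_le (by omega), ← moment_eq_riesz_of_relation (K := K - n + u)
            (L := L + v) hrg (degLE_mono hp (by omega)) (by omega) hrelX (by omega)]
          congr 1
          omega
        · rw [extMoment_of_eq (by omega), topMoment_of_le (by omega), riesz_apply]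
          refine boxPairing_congr fun a b _ => ?_
          congr 1 <;> omega

lemma riesz_extMoment_relY (hn : 1 ≤ n) (hnd : n ≤ d) (hmd : m ≤ d) (hp : DegLE p (n - 1))
    (hq : DegLE q m) (hq0 : q 0 m = 0) (hrg : RecursivelyGenerated d β)
    (hrelX : polyCol d β (monoC n 0 - p) = 0) (hrelY : polyCol d β (monoC 0 m - q) = 0)
    {K L : ℕ} (h : K + L + m ≤ 2 * d + 1) :
    riesz (d + 2) (extMoment d n m β p q) K L (monoC 0 m - q) = 0 := by
  have hr : DegLE (monoC 0 m - q) m := degLE_monoC_sub hq (by omega)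
  rcases Nat.lt_or_ge (K + L + m) (2 * d + 1) with hlt | htop
  · rw [riesz_extMoment_of_le hr (by omega)]
    exact riesz_eq_zero_of_polyCol_eq_zero hrg hr hmd hrelY (by omega)
  rw [map_sub, riesz_monoC (by omega) (by omega), extMoment_of_eq (by omega), add_zero,
    sub_eq_zero]
  rcases Nat.lt_or_ge K n with hKn | hKn
  · exact topMoment_eq_riesz_of_lt hq hq0 hKn (by omega)
  · exact topMoment_eq_riesz_of_le hn hnd hmd hp hq hrg hrelX hrelY hKn (by omega)

end Moments

section Kernel

def extendCoeff (d : ℕ) : (Idx d → ℝ) →ₗ[ℝ] (ℕ → ℕ → ℝ) where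
  toFun v a b := if h : a + b ≤ d then v ⟨(a, b), h⟩ else 0
  map_add' v w := by
    funext a b
    simp only [Pi.add_apply]
    split_ifs <;> simp
  map_smul' c v := by
    funext a b
    simp only [Pi.smul_apply, smul_eq_mul, RingHom.id_apply]
    split_ifs <;> simp

variable {d n m : ℕ} {β p q a : ℕ → ℕ → ℝ}

lemma extendCoeff_degLE (v : Idx d → ℝ) : DegLE (extendCoeff d v) d := fun k l h =>
  dif_neg (by omega)

lemma extendCoeff_coeffVec (ha : DegLE a d) : extendCoeff d (coeffVec d a) = a := by
  funext k l
  change (if h : k + l ≤ d then a k l else 0) = a k l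
  split_ifs with h
  · rfl
  · exact (ha k l (by omega)).symm

lemma riesz_extMoment_eq_zero_of_mulVec_eq_zero (hgen : GeneratedBy d n m β p q)
    (hrg : RecursivelyGenerated d β) {v : Idx d → ℝ} (hv : momentMatrix d β *ᵥ v = 0)
    {K L : ℕ} (h : K + L ≤ d + 1) :
    riesz (d + 2) (extMoment d n m β p q) K L (extendCoeff d v) = 0 := by
  obtain ⟨hn, hnd, -, hmd, hp, hq, hq0, hrelX, hrelY, hker⟩ := hgen
  have hrX : DegLE (monoC n 0 - p) n := degLE_monoC_sub (degLE_mono hp (by omega)) (by omega)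
  have hrY : DegLE (monoC 0 m - q) m := degLE_monoC_sub hq (by omega)
  refine (Submodule.span_le (p := LinearMap.ker
    ((riesz (d + 2) (extMoment d n m β p q) K L).comp (extendCoeff d)))).2 ?_ ((hker v).1 hv)
  rintro w (⟨i, j, hij, rfl⟩ | ⟨i, j, hij, rfl⟩) <;>
    simp only [SetLike.mem_coe, LinearMap.mem_ker, LinearMap.comp_apply]
  · rw [extendCoeff_coeffVec (degLE_mono (degLE_shiftC hrX i j) (by omega)),
      riesz_shiftC hrX (by omega)]
    exact riesz_extMoment_relX hn hnd hp hrg hrelX (by omega)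
  · rw [extendCoeff_coeffVec (degLE_mono (degLE_shiftC hrY i j) (by omega)),
      riesz_shiftC hrY (by omega)]
    exact riesz_extMoment_relY hn hnd hmd hp hq hq0 hrg hrelX hrelY (by omega)

lemma riesz_extMoment_eq_zero_of_polyCol_eq_zero (hgen : GeneratedBy d n m β p q)
    (hrg : RecursivelyGenerated d β) {e : ℕ} (ha : DegLE a e) (he : e ≤ d)
    (h0 : polyCol d β a = 0) {K L : ℕ} (h : K + L + e ≤ 2 * d + 1) :
    riesz (d + 2) (extMoment d n m β p q) K L a = 0 := by
  have hlow : ∀ b : ℕ → ℕ → ℝ, DegLE b d → polyCol d β b = 0 → ∀ K L, K + L ≤ d + 1 →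
      riesz (d + 2) (extMoment d n m β p q) K L b = 0 := fun b hb h0 K L h => by
    rw [← extendCoeff_coeffVec hb]
    exact riesz_extMoment_eq_zero_of_mulVec_eq_zero hgen hrg h0 h
  by_cases hKL : K + L ≤ d + 1
  · exact hlow a (degLE_mono ha he) h0 K L hKL
  obtain ⟨A, B, K₀, L₀, rfl, rfl, hAB⟩ :
      ∃ A B K₀ L₀, K = K₀ + A ∧ L = L₀ + B ∧ K₀ + L₀ = d + 1 :=
    ⟨min K (K + L - (d + 1)), K + L - (d + 1) - min K (K + L - (d + 1)),
      K - min K (K + L - (d + 1)), L - (K + L - (d + 1) - min K (K + L - (d + 1))),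
      by omega, by omega, by omega⟩
  rw [← riesz_shiftC ha (by omega)]
  exact hlow _ (degLE_mono (degLE_shiftC ha A B) (by omega))
    (polyCol_shiftC_eq_zero hrg ha h0 (by omega)) _ _ hAB.le

lemma riesz_extMoment_eq_zero_of_rows (hgen : GeneratedBy d n m β p q)
    (hrg : RecursivelyGenerated d β) {e : ℕ} (ha : DegLE a e) (he : e ≤ d + 1)
    (hrows : ∀ k l, k + l ≤ d → riesz (d + 2) (extMoment d n m β p q) k l a = 0)
    {K L : ℕ} (h : K + L + e ≤ 2 * d + 1) :
    riesz (d + 2) (extMoment d n m β p q) K L a = 0 := by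
  by_cases hKL : K + L ≤ d
  · exact hrows K L hKL
  have he' : e ≤ d := by omega
  refine riesz_extMoment_eq_zero_of_polyCol_eq_zero hgen hrg ha he' ?_ h
  funext ⟨⟨k, l⟩, hkl⟩
  rw [polyCol_apply (degLE_mono ha he'), Pi.zero_apply]
  exact (riesz_extMoment_of_le ha (by omega)).symm.trans (hrows k l hkl)

end Kernel

section Products

variable {a b : ℕ → ℕ → ℝ}

def IsLeading (a : ℕ → ℕ → ℝ) (i j : ℕ) : Prop :=
  a i j ≠ 0 ∧ ∀ u v, a u v ≠ 0 → u + v < i + j ∨ (u + v = i + j ∧ u ≤ i)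

lemma exists_isLeading {D : ℕ} (ha : DegLE a D) (hne : ∃ u v, a u v ≠ 0) :
    ∃ i j, IsLeading a i j := by
  classical
  let S := (range (D + 1) ×ˢ range (D + 1)).filter fun x => a x.1 x.2 ≠ 0
  have hmem : ∀ u v, a u v ≠ 0 → (u, v) ∈ S := fun u v h => by
    have : u + v ≤ D := by
      by_contra hc
      exact h (ha u v (by omega))
    simp only [S, mem_filter, mem_product, mem_range]
    exact ⟨⟨by omega, by omega⟩, h⟩
  obtain ⟨u, v, h⟩ := hne
  obtain ⟨x, hxS, hmax⟩ := S.exists_max_image (fun x => toLex (x.1 + x.2, x.1)) ⟨_, hmem u v h⟩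
  exact ⟨x.1, x.2, (mem_filter.1 hxS).2, fun u v h =>
    Prod.Lex.toLex_le_toLex.1 (hmax (u, v) (hmem u v h))⟩

lemma IsLeading.degLE {i j : ℕ} (h : IsLeading a i j) : DegLE a (i + j) := fun u v huv => by
  by_contra hne
  have := h.2 u v hne
  omega

lemma IsLeading.cMul {i j i' j' : ℕ} (ha : IsLeading a i j) (hb : IsLeading b i' j') :
    cMul a b (i + i') (j + j') = a i j * b i' j' := by
  have key : ∀ u ∈ range (i + i' + 1), ∀ v ∈ range (j + j' + 1),
      a u v * b (i + i' - u) (j + j' - v) ≠ 0 → u = i ∧ v = j := fun u hu v hv hne => by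
    rw [mem_range] at hu hv
    have h1 := ha.2 u v (left_ne_zero_of_mul hne)
    have h2 := hb.2 _ _ (right_ne_zero_of_mul hne)
    omega
  simp only [_root_.cMul]
  rw [sum_eq_single_of_mem i (mem_range.2 (by omega)),
    sum_eq_single_of_mem j (mem_range.2 (by omega)), Nat.add_sub_cancel_left,
    Nat.add_sub_cancel_left]
  · exact fun v hv hvj => by_contra fun hne => hvj (key i (mem_range.2 (by omega)) v hv hne).2
  · exact fun u hu hui => sum_eq_zero fun v hv => by_contra fun hne => hui (key u hu v hv hne).1

lemma exists_degLE_add_le_of_cMul {D E : ℕ} (ha : DegLE a D) (hb : DegLE b D)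
    (hab : DegLE (cMul a b) E) (ha0 : ∃ u v, a u v ≠ 0) (hb0 : ∃ u v, b u v ≠ 0) :
    ∃ e e', DegLE a e ∧ DegLE b e' ∧ e + e' ≤ E := by
  obtain ⟨i, j, hla⟩ := exists_isLeading ha ha0
  obtain ⟨i', j', hlb⟩ := exists_isLeading hb hb0
  refine ⟨i + j, i' + j', hla.degLE, hlb.degLE, ?_⟩
  by_contra hc
  exact mul_ne_zero hla.1 hlb.1 (hla.cMul hlb ▸ hab _ _ (by omega))

lemma cMul_eq_sum_shiftC {R k l : ℕ} (hk : k < R) (hl : l < R) :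
    cMul a b k l = ∑ u ∈ range R, ∑ v ∈ range R, b u v * shiftC u v a k l := by
  simp only [shiftC, mul_ite, mul_zero]
  rw [sum_range_eq_of_vanish (D := k) hk _ fun u hu => sum_eq_zero fun v _ => if_neg (by omega)]
  simp only [cMul]
  rw [← sum_range_reflect]
  refine sum_congr rfl fun u hu => ?_
  rw [mem_range] at hu
  rw [sum_range_eq_of_vanish (D := l) hl _ fun v hv => if_neg (by omega), ← sum_range_reflect]
  refine sum_congr rfl fun v hv => ?_
  rw [mem_range] at hv
  rw [if_pos (by omega), mul_comm]
  congr 2 <;> omega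

end Products

section Existence

variable {d n m : ℕ} {β p q w : ℕ → ℕ → ℝ}

lemma augRel_iff {B : Matrix (Idx d) (Jdx (d + 1)) ℝ} (hw : DegLE w (d + 1)) :
    AugRel d β B w ↔ ∀ k l, k + l ≤ d → boxPairing (d + 2) (augEntry d β B k l) w = 0 := by
  simp only [AugRel, sum_idx_eq_boxPairing (f := augEntry d β B _ _) hw]

lemma augEntry_extBlock {k l u v : ℕ} (hkl : k + l ≤ d) (huv : u + v ≤ d + 1) :
    augEntry d β (extBlock d n m β p q) k l u v = extMoment d n m β p q (k + u) (l + v) := by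
  rw [augEntry, dif_pos hkl]
  split_ifs with h
  · exact (extMoment_of_le (by omega)).symm
  · rfl
  · omega

lemma augRel_extBlock_iff (hw : DegLE w (d + 1)) :
    AugRel d β (extBlock d n m β p q) w ↔
      ∀ k l, k + l ≤ d → riesz (d + 2) (extMoment d n m β p q) k l w = 0 := by
  rw [augRel_iff hw]
  refine forall₂_congr fun k l => imp_congr_right fun hkl => ?_
  rw [boxPairing_congr fun u v hne => augEntry_extBlock hkl (by
    by_contra hc
    exact hne (hw u v (by omega)))]
  rfl

lemma extBlock_of_le (hd : 1 ≤ d) {r : Idx d} {c : Jdx (d + 1)} (h : r.1.1 + r.1.2 ≤ d - 1) :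
    extBlock d n m β p q r c = β (r.1.1 + c.1.1) (r.1.2 + c.1.2) :=
  extMoment_of_le (by have := c.2; omega)

lemma extBlock_hankel {r r' : Idx d} {c c' : Jdx (d + 1)}
    (h₁ : r.1.1 + c.1.1 = r'.1.1 + c'.1.1) (h₂ : r.1.2 + c.1.2 = r'.1.2 + c'.1.2) :
    extBlock d n m β p q r c = extBlock d n m β p q r' c' := by
  simp only [extBlock, of_apply, h₁, h₂]

lemma augRel_extBlock_relX (hgen : GeneratedBy d n m β p q) (hrg : RecursivelyGenerated d β)
    {A B : ℕ} (h : n + A + B ≤ d + 1) :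
    AugRel d β (extBlock d n m β p q) (shiftC A B (monoC n 0 - p)) := by
  obtain ⟨hn, hnd, -, -, hp, -, -, hrelX, -, -⟩ := hgen
  have hr : DegLE (monoC n 0 - p) n := degLE_monoC_sub (degLE_mono hp (by omega)) (by omega)
  rw [augRel_extBlock_iff (degLE_mono (degLE_shiftC hr A B) (by omega))]
  intro k l hkl
  rw [riesz_shiftC hr (by omega)]
  exact riesz_extMoment_relX hn hnd hp hrg hrelX (by omega)

lemma augRel_extBlock_relY (hgen : GeneratedBy d n m β p q) (hrg : RecursivelyGenerated d β)
    {A B : ℕ} (h : m + A + B ≤ d + 1) :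
    AugRel d β (extBlock d n m β p q) (shiftC A B (monoC 0 m - q)) := by
  obtain ⟨hn, hnd, -, hmd, hp, hq, hq0, hrelX, hrelY, -⟩ := hgen
  have hr : DegLE (monoC 0 m - q) m := degLE_monoC_sub hq (by omega)
  rw [augRel_extBlock_iff (degLE_mono (degLE_shiftC hr A B) (by omega))]
  intro k l hkl
  rw [riesz_shiftC hr (by omega)]
  exact riesz_extMoment_relY hn hnd hmd hp hq hq0 hrg hrelX hrelY (by omega)

lemma augRecGen_extBlock (hgen : GeneratedBy d n m β p q) (hrg : RecursivelyGenerated d β) :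
    AugRecGen d β (extBlock d n m β p q) := by
  intro a b ha hb hab hrel
  rw [augRel_extBlock_iff ha] at hrel
  rw [augRel_extBlock_iff hab]
  intro k l hkl
  by_cases ha0 : ∃ u v, a u v ≠ 0; swap
  · simp only [not_exists, not_not] at ha0
    rw [show cMul a b = 0 by funext x y; simp [cMul, ha0], map_zero]
  by_cases hb0 : ∃ u v, b u v ≠ 0; swap
  · simp only [not_exists, not_not] at hb0
    rw [show cMul a b = 0 by funext x y; simp [cMul, hb0], map_zero]
  obtain ⟨e, e', hae, hbe, hee⟩ := exists_degLE_add_le_of_cMul ha hb hab ha0 hb0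
  rw [riesz_apply, boxPairing_congr_right
    (w' := ∑ u ∈ range (d + 2), ∑ v ∈ range (d + 2), b u v • shiftC u v a) fun x hx y hy => by
      simp only [Finset.sum_apply, Pi.smul_apply, smul_eq_mul, cMul_eq_sum_shiftC hx hy]]
  rw [← riesz_apply, map_sum]
  refine sum_eq_zero fun u _ => ?_
  rw [map_sum]
  refine sum_eq_zero fun v _ => ?_
  by_cases hbuv : b u v = 0
  · rw [hbuv, zero_smul, map_zero]
  have huv : u + v ≤ e' := by
    by_contra hc
    exact hbuv (hbe u v (by omega))
  rw [map_smul, riesz_shiftC hae (by omega),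
    riesz_extMoment_eq_zero_of_rows hgen hrg hae (by omega) hrel (by omega), smul_zero]

lemma exists_mulVec_eq_of_forall_dotProduct_eq_zero {ι : Type*} [Fintype ι] [DecidableEq ι]
    {M : Matrix ι ι ℝ} (hM : M.IsSymm) {x : ι → ℝ} (h : ∀ w, M *ᵥ w = 0 → x ⬝ᵥ w = 0) :
    ∃ v, x = M *ᵥ v := by
  have hT : M.toEuclideanLin.IsSymmetric :=
    isSymmetric_toEuclideanLin_iff.2 (isHermitian_iff_isSymm.2 hM)
  have hx : WithLp.toLp 2 x ∈ (LinearMap.ker M.toEuclideanLin)ᗮ := by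
    rw [Submodule.mem_orthogonal]
    intro w hw
    rw [LinearMap.mem_ker] at hw
    have := h (WithLp.ofLp w) (congrArg WithLp.ofLp hw)
    simpa [EuclideanSpace.inner_eq_star_dotProduct, dotProduct_comm] using this
  rw [← hT.orthogonal_range, Submodule.orthogonal_orthogonal] at hx
  obtain ⟨v, hv⟩ := hx
  exact ⟨WithLp.ofLp v, (congrArg WithLp.ofLp hv).symm⟩

lemma momentMatrix_isSymm : (momentMatrix d β).IsSymm := by
  ext r c
  simp only [momentMatrix, transpose_apply, of_apply, Nat.add_comm]

lemma extBlock_col_mem_range (hgen : GeneratedBy d n m β p q) (hrg : RecursivelyGenerated d β)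
    (c : Jdx (d + 1)) :
    ∃ v : Idx d → ℝ, (fun r : Idx d => extBlock d n m β p q r c) = momentMatrix d β *ᵥ v := by
  refine exists_mulVec_eq_of_forall_dotProduct_eq_zero momentMatrix_isSymm fun w hw => ?_
  have := riesz_extMoment_eq_zero_of_mulVec_eq_zero hgen hrg hw (K := c.1.1) (L := c.1.2) c.2.le
  rw [riesz_apply, ← boxPairing_eq_of_degLE (R := d + 1) (R' := d + 2) (extendCoeff_degLE w)
    (by omega) (by omega), ← sum_idx_eq_boxPairing (extendCoeff_degLE w)] at this
  rw [dotProduct, ← this]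
  refine sum_congr rfl fun r _ => ?_
  simp only [extBlock, of_apply, extendCoeff, LinearMap.coe_mk, AddHom.coe_mk, dif_pos r.2,
    Nat.add_comm c.1.1, Nat.add_comm c.1.2]
  exact mul_comm _ _

end Existence

section Uniqueness

def IsHankelTop {d : ℕ} (B : Matrix (Idx d) (Jdx (d + 1)) ℝ) : Prop :=
  ∀ (r r' : Idx d) (c c' : Jdx (d + 1)),
    r.1.1 + r.1.2 = d → r'.1.1 + r'.1.2 = d →
    r.1.1 + c.1.1 = r'.1.1 + c'.1.1 → r.1.2 + c.1.2 = r'.1.2 + c'.1.2 → B r c = B r' c'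

variable {d n m : ℕ} {β p q : ℕ → ℕ → ℝ} {B : Matrix (Idx d) (Jdx (d + 1)) ℝ}

lemma augEntry_of_le {k l u v : ℕ} (hkl : k + l ≤ d) (huv : u + v ≤ d) :
    augEntry d β B k l u v = β (k + u) (l + v) := by
  rw [augEntry, dif_pos hkl, if_pos huv]

lemma augEntry_of_eq {k l u v : ℕ} (hkl : k + l ≤ d) (huv : u + v = d + 1) :
    augEntry d β B k l u v = B ⟨(k, l), hkl⟩ ⟨(u, v), huv⟩ := by
  rw [augEntry, dif_pos hkl, if_neg (by omega), dif_pos huv]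

lemma IsHankelTop.augEntry_eq (hB : IsHankelTop B) {k l u v k' l' u' v' : ℕ}
    (hkl : k + l = d) (hk'l' : k' + l' = d) (huv : u + v = d + 1) (hu'v' : u' + v' = d + 1)
    (h : k + u = k' + u') : augEntry d β B k l u v = augEntry d β B k' l' u' v' := by
  rw [augEntry_of_eq hkl.le huv, augEntry_of_eq hk'l'.le hu'v']
  exact hB _ _ _ _ hkl hk'l' h (by simp only; omega)

lemma augEntry_of_augRel {A A' a₀ b₀ k l : ℕ} {r : ℕ → ℕ → ℝ} (hr : DegLE r (a₀ + b₀))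
    (h : A + A' + a₀ + b₀ ≤ d + 1) (hrel : AugRel d β B (shiftC A A' (monoC a₀ b₀ - r)))
    (hkl : k + l ≤ d) :
    augEntry d β B k l (A + a₀) (A' + b₀)
      = boxPairing (d + 2) (fun u v => augEntry d β B k l (A + u) (A' + v)) r := by
  have hr' := degLE_monoC_sub hr le_rfl
  have h0 := (augRel_iff (degLE_mono (degLE_shiftC hr' A A') (by omega))).1 hrel k l hkl
  rwa [boxPairing_shiftC hr' (by omega), map_sub, boxPairing_monoC (by omega) (by omega),
    sub_eq_zero] at h0

lemma IsHankelTop.augEntry_eq_topMoment_of_le (hB : IsHankelTop B) (hn : 1 ≤ n) (hnd : n ≤ d)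
    (hp : DegLE p (n - 1))
    (hX : ∀ a b, n + a + b ≤ d + 1 → AugRel d β B (shiftC a b (monoC n 0 - p)))
    {k l u v : ℕ} (hkl : k + l = d) (huv : u + v = d + 1) (hs : n ≤ k + u) :
    augEntry d β B k l u v = topMoment d n m β p q (k + u) := by
  set i₀ := min (k + u) (d + 1)
  have := augEntry_of_augRel (A := i₀ - n) (A' := d + 1 - i₀) (a₀ := n) (b₀ := 0) (B := B)
    (degLE_mono hp (by omega)) (by omega) (hX _ _ (by omega)) (k := k + u - i₀)
    (l := d - (k + u - i₀)) (by omega)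
  rw [show i₀ - n + n = i₀ by omega, add_zero] at this
  rw [hB.augEntry_eq (k' := k + u - i₀) (l' := d - (k + u - i₀)) (u' := i₀) (v' := d + 1 - i₀)
    hkl (by omega) huv (by omega) (by omega), this, topMoment_of_le hs]
  refine boxPairing_congr fun a b hne => ?_
  have : a + b ≤ n - 1 := by
    by_contra hc
    exact hne (hp a b (by omega))
  rw [augEntry_of_le (by omega) (by omega)]
  congr 1 <;> omega

lemma IsHankelTop.augEntry_eq_topMoment (hB : IsHankelTop B) (hgen : GeneratedBy d n m β p q)
    (hX : ∀ a b, n + a + b ≤ d + 1 → AugRel d β B (shiftC a b (monoC n 0 - p)))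
    (hY : ∀ a b, m + a + b ≤ d + 1 → AugRel d β B (shiftC a b (monoC 0 m - q)))
    {k l u v : ℕ} (hkl : k + l = d) (huv : u + v = d + 1) :
    augEntry d β B k l u v = topMoment d n m β p q (k + u) := by
  obtain ⟨hn, hnd, -, hmd, hp, hq, hq0, -⟩ := hgen
  induction hs : n - (k + u) using Nat.strong_induction_on generalizing k l u v with
  | _ t ih =>
  rcases le_or_gt n (k + u) with hnk | hkn
  · exact hB.augEntry_eq_topMoment_of_le hn hnd hp hX hkl huv hnk
  have := augEntry_of_augRel (A := 0) (A' := d + 1 - m) (a₀ := 0) (b₀ := m) (B := B)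
    (by simpa using hq) (by omega) (hY _ _ (by omega)) (k := k + u) (l := d - (k + u))
    (by omega)
  rw [zero_add, show d + 1 - m + m = d + 1 by omega] at this
  rw [hB.augEntry_eq (k' := k + u) (l' := d - (k + u)) (u' := 0) (v' := d + 1) hkl (by omega)
    huv (by omega) (by omega), this, topMoment_of_lt hkn]
  refine boxPairing_congr fun a b hne => ?_
  have : a + b ≤ m := by
    by_contra hc
    exact hne (hq a b (by omega))
  split_ifs with h₁ h₂
  · rw [augEntry_of_le (by omega) (by omega)]
    congr 1 <;> omega
  · rw [zero_add, ih (n - (k + u + a)) (by omega) (by omega) (by omega) rfl]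
  · obtain rfl : a = 0 := by omega
    obtain rfl : b = m := by omega
    exact absurd hq0 hne

lemma eq_extBlock (hd : 1 ≤ d) (hgen : GeneratedBy d n m β p q)
    (hlow : ∀ (r : Idx d) (c : Jdx (d + 1)), r.1.1 + r.1.2 ≤ d - 1 →
      B r c = β (r.1.1 + c.1.1) (r.1.2 + c.1.2))
    (hB : IsHankelTop B)
    (hX : ∀ a b, n + a + b ≤ d + 1 → AugRel d β B (shiftC a b (monoC n 0 - p)))
    (hY : ∀ a b, m + a + b ≤ d + 1 → AugRel d β B (shiftC a b (monoC 0 m - q))) :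
    B = extBlock d n m β p q := by
  ext ⟨⟨k, l⟩, hr⟩ ⟨⟨u, v⟩, hc⟩
  by_cases h : k + l ≤ d - 1
  · rw [hlow _ _ h, extBlock_of_le hd h]
  · rw [← augEntry_of_eq (β := β) (B := B) (k := k) (l := l) (u := u) (v := v) hr hc,
      hB.augEntry_eq_topMoment hgen hX hY (by omega) hc]
    exact (extMoment_of_eq (a := k + u) (b := l + v) (by simp only at hr hc; omega)).symm

end Uniqueness

end MomentExtension

open MomentExtension in
theorem statement1_general (d n m : ℕ) (hd : 1 ≤ d) (β p q : ℕ → ℕ → ℝ)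
    (hrg : RecursivelyGenerated d β)
    (hgen : GeneratedBy d n m β p q) :
    ∃! B : Matrix (Idx d) (Jdx (d + 1)) ℝ,
      (∀ (r : Idx d) (c : Jdx (d + 1)), r.1.1 + r.1.2 ≤ d - 1 →
        B r c = β (r.1.1 + c.1.1) (r.1.2 + c.1.2)) ∧
      (∀ (r r' : Idx d) (c c' : Jdx (d + 1)),
        r.1.1 + r.1.2 = d → r'.1.1 + r'.1.2 = d →
        r.1.1 + c.1.1 = r'.1.1 + c'.1.1 → r.1.2 + c.1.2 = r'.1.2 + c'.1.2 →
        B r c = B r' c') ∧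
      (∀ a b : ℕ, n + a + b ≤ d + 1 → AugRel d β B (shiftC a b (monoC n 0 - p))) ∧
      (∀ a b : ℕ, m + a + b ≤ d + 1 → AugRel d β B (shiftC a b (monoC 0 m - q))) ∧
      AugRecGen d β B ∧
      (∀ c : Jdx (d + 1), ∃ v : Idx d → ℝ,
        (fun r : Idx d => B r c) = momentMatrix d β *ᵥ v) := by
  refine ⟨extBlock d n m β p q,
    ⟨fun r c h => extBlock_of_le hd h, fun r r' c c' _ _ h₁ h₂ => extBlock_hankel h₁ h₂,
      fun a b h => augRel_extBlock_relX hgen hrg h, fun a b h => augRel_extBlock_relY hgen hrg h,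
      augRecGen_extBlock hgen hrg, extBlock_col_mem_range hgen hrg⟩, ?_⟩
  rintro B ⟨hlow, hB, hX, hY, -, -⟩
  exact eq_extBlock hd hgen hlow hB hX hY

/-- If `M_d(β)` is positive semidefinite, recursively generated, and its
column relations are generated entirely by `X^n = p` and `Y^m = q` via recursiveness and
linearity, then there is a unique block `B(d+1)` such that: (a) its rows of degree ≤ d-1
consist of the old moments; (b) its degree-d row block is Hankel; (c) the columns of
`(M_d  B(d+1))` satisfy all relations `(x^a y^b (x^n - p))(X,Y) = 0` and
`(x^a y^b (y^m - q))(X,Y) = 0` of degree ≤ d+1 and `(M_d  B(d+1))` is recursively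
generated; and (d) the column space of `B(d+1)` is contained in that of `M_d`. -/
theorem statement1 (d n m : ℕ) (hd : 1 ≤ d) (β p q : ℕ → ℕ → ℝ)
    (hpsd : (momentMatrix d β).PosSemidef)
    (hrg : RecursivelyGenerated d β)
    (hgen : GeneratedBy d n m β p q) :
    ∃! B : Matrix (Idx d) (Jdx (d + 1)) ℝ,
      (∀ (r : Idx d) (c : Jdx (d + 1)), r.1.1 + r.1.2 ≤ d - 1 →
        B r c = β (r.1.1 + c.1.1) (r.1.2 + c.1.2)) ∧
      (∀ (r r' : Idx d) (c c' : Jdx (d + 1)),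
        r.1.1 + r.1.2 = d → r'.1.1 + r'.1.2 = d →
        r.1.1 + c.1.1 = r'.1.1 + c'.1.1 → r.1.2 + c.1.2 = r'.1.2 + c'.1.2 →
        B r c = B r' c') ∧
      (∀ a b : ℕ, n + a + b ≤ d + 1 → AugRel d β B (shiftC a b (monoC n 0 - p))) ∧
      (∀ a b : ℕ, m + a + b ≤ d + 1 → AugRel d β B (shiftC a b (monoC 0 m - q))) ∧
      AugRecGen d β B ∧
      (∀ c : Jdx (d + 1), ∃ v : Idx d → ℝ,
        (fun r : Idx d => B r c) = momentMatrix d β *ᵥ v) :=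
  statement1_general d n m hd β p q hrg hgen
end
end

section
/- Let d ≥ 1, let x_1, …, x_d be distinct reals and y_1, …, y_d be distinct reals, let G = {(x_i, y_j) : 1 ≤ i, j ≤ d} ⊂ ℝ², let μ be a finitely atomic positive measure on ℝ² whose support is exactly G, and let P(x,y) = ∏_{i=1}^d (x − x_i) and Q(x,y) = ∏_{j=1}^d (y − y_j). Then for every k ≥ 0 and every polynomial r ∈ ℝ[x,y] with deg r ≤ d + k, the coefficient vector of r lies in the kernel of M_{d+k}[μ] if and only if there exist u, v ∈ ℝ[x,y] with deg u ≤ k and deg v ≤ k such that r = uP + vQ. -/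
/-!
For `μ = ∑ ρᵢⱼ δ_(xᵢ, yⱼ)` the vector `M_D[μ] v_r` has entries `∑ ρᵢⱼ xᵢᵃ yⱼᵇ r(xᵢ, yⱼ)` and
`v_r ⬝ M_D[μ] v_r = ∑ ρᵢⱼ r(xᵢ, yⱼ)²`, so with positive weights `v_r` lies in the kernel exactly
when `r` vanishes on the grid. Alon's Combinatorial Nullstellensatz writes such an `r` as
`u P + v Q` with `deg (P u), deg (Q v) ≤ deg r`, and since `ℝ[x, y]` is a domain and
`deg P = deg Q = d`, this gives `deg u, deg v ≤ k`.
-/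

open Finset Matrix

noncomputable section

open MeasureTheory

/-- The moment multisequence of a measure `μ` on `ℝ²`. -/
def momentsOf (μ : Measure (ℝ × ℝ)) : ℕ → ℕ → ℝ :=
  fun i j => ∫ z : ℝ × ℝ, z.1 ^ i * z.2 ^ j ∂μ

/-- The coefficient vector, truncated to degree ≤ D, of a bivariate polynomial. -/
def mvCoeffVec (D : ℕ) (r : MvPolynomial (Fin 2) ℝ) : Idx D → ℝ :=
  fun c => MvPolynomial.coeff (Finsupp.single 0 c.1.1 + Finsupp.single 1 c.1.2) r

open MvPolynomial

namespace MvPolynomial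

variable {R σ : Type*} [CommRing R]

theorem totalDegree_prod_X_sub_C [Nontrivial R] (j : σ) (S : Finset R) :
    (∏ s ∈ S, (X j - C s)).totalDegree = #S := by
  obtain ⟨_, _⟩ := exists_wellFoundedGT σ
  rw [← degree_degLexDegree, MonomialOrder.degree_prod_of_regular]
  · simp [MonomialOrder.degree_X_sub_C]
  · intro i _
    rw [(MonomialOrder.monic_X_sub_C _ j i).leadingCoeff_eq_one]
    exact isRegular_one

theorem totalDegree_le_of_prod_X_sub_C_mul_le [IsDomain R] {j : σ} {S : Finset R}
    {h : MvPolynomial σ R} {k : ℕ}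
    (hle : ((∏ s ∈ S, (X j - C s)) * h).totalDegree ≤ #S + k) : h.totalDegree ≤ k := by
  rcases eq_or_ne h 0 with rfl | hh
  · simp
  have hP : ∏ s ∈ S, (X j - C s) ≠ (0 : MvPolynomial σ R) :=
    prod_ne_zero_iff.2 fun s _ h0 => one_ne_zero (α := R) <| by
      simpa using congrArg (eval fun _ => s + 1) h0
  rw [totalDegree_mul_of_isDomain hP hh, totalDegree_prod_X_sub_C] at hle
  omega

theorem exists_eq_mul_add_mul_of_eval_eq_zero [IsDomain R] {S T : Finset R}
    (hS : S.Nonempty) (hT : T.Nonempty) {r : MvPolynomial (Fin 2) R}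
    (hr : ∀ s ∈ S, ∀ t ∈ T, eval ![s, t] r = 0) :
    ∃ u v : MvPolynomial (Fin 2) R,
      ((∏ s ∈ S, (X 0 - C s)) * u).totalDegree ≤ r.totalDegree ∧
      ((∏ t ∈ T, (X 1 - C t)) * v).totalDegree ≤ r.totalDegree ∧
      r = u * ∏ s ∈ S, (X 0 - C s) + v * ∏ t ∈ T, (X 1 - C t) := by
  obtain ⟨h, hdeg, hlin⟩ := combinatorial_nullstellensatz_exists_linearCombination ![S, T]
    (Fin.forall_fin_two.2 ⟨hS, hT⟩) r fun p hp => by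
      rw [show p = ![p 0, p 1] from List.ofFn_inj.mp rfl]
      exact hr (p 0) (hp 0) (p 1) (hp 1)
  refine ⟨h 0, h 1, hdeg 0, hdeg 1, ?_⟩
  rw [hlin, Finsupp.linearCombination_apply, Finsupp.sum_fintype _ _ (by simp), Fin.sum_univ_two]
  simp [mul_comm]

end MvPolynomial

theorem MvPolynomial.apply_zero_add_apply_one_le_totalDegree {R : Type*} [CommSemiring R]
    {r : MvPolynomial (Fin 2) R} {m : Fin 2 →₀ ℕ} (hm : m ∈ r.support) :
    m 0 + m 1 ≤ r.totalDegree := by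
  simpa [Finsupp.sum_fintype, Fin.sum_univ_two] using le_totalDegree hm

theorem sum_mvCoeffVec_mul_eq_eval {D : ℕ} {r : MvPolynomial (Fin 2) ℝ}
    (hr : r.totalDegree ≤ D) (p : Fin 2 → ℝ) :
    ∑ c : Idx D, mvCoeffVec D r c * (p 0 ^ c.1.1 * p 1 ^ c.1.2) = eval p r := by
  classical
  let toExp : Idx D → Fin 2 →₀ ℕ := fun c => Finsupp.single 0 c.1.1 + Finsupp.single 1 c.1.2
  have hexp : ∀ c, toExp c 0 = c.1.1 ∧ toExp c 1 = c.1.2 := fun c => by simp [toExp]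
  have hinj : ∀ c c', toExp c = toExp c' → c = c' := fun c c' h => Subtype.ext <|
    Prod.ext (by rw [← (hexp c).1, h, (hexp c').1]) (by rw [← (hexp c).2, h, (hexp c').2])
  have hsupp : r.support ⊆ univ.image toExp := fun m hm => mem_image.2
    ⟨⟨(m 0, m 1), (apply_zero_add_apply_one_le_totalDegree hm).trans hr⟩, mem_univ _,
      by ext i; fin_cases i <;> simp [toExp]⟩
  rw [eval_eq', sum_subset hsupp fun m _ hm => by rw [notMem_support_iff.1 hm, zero_mul],
    sum_image fun c _ c' _ => hinj c c']
  refine sum_congr rfl fun c _ => ?_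
  rw [Fin.prod_univ_two, (hexp c).1, (hexp c).2]
  rfl

section AtomicMeasure

variable {ι : Type*} [Fintype ι] (w : ι → ℝ) (z : ι → ℝ × ℝ)

def atomicMoments : ℕ → ℕ → ℝ := fun a b => ∑ t, w t * ((z t).1 ^ a * (z t).2 ^ b)

theorem momentsOf_sum_dirac (hw : ∀ t, 0 ≤ w t) :
    momentsOf (∑ t, ENNReal.ofReal (w t) • Measure.dirac (z t)) = atomicMoments w z := by
  ext a b
  have hint : ∀ t, Integrable (fun p : ℝ × ℝ => p.1 ^ a * p.2 ^ b)
      (ENNReal.ofReal (w t) • Measure.dirac (z t)) := fun t =>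
    (integrable_dirac enorm_lt_top).smul_measure ENNReal.ofReal_ne_top
  rw [momentsOf, integral_finsetSum_measure fun t _ => hint t]
  refine sum_congr rfl fun t _ => ?_
  rw [integral_smul_measure, integral_dirac, ENNReal.toReal_ofReal (hw t), smul_eq_mul]

variable {D : ℕ} {r : MvPolynomial (Fin 2) ℝ}

theorem momentMatrix_atomicMoments_mulVec (hr : r.totalDegree ≤ D) (c : Idx D) :
    (momentMatrix D (atomicMoments w z) *ᵥ mvCoeffVec D r) c =
      ∑ t, w t * ((z t).1 ^ c.1.1 * (z t).2 ^ c.1.2) * eval ![(z t).1, (z t).2] r := by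
  simp only [mulVec, dotProduct, momentMatrix, of_apply, atomicMoments, sum_mul]
  rw [sum_comm]
  refine sum_congr rfl fun t _ => ?_
  rw [← sum_mvCoeffVec_mul_eq_eval hr, mul_sum]
  refine sum_congr rfl fun c' _ => ?_
  simp only [pow_add, Matrix.cons_val_zero, Matrix.cons_val_one]
  ring

theorem mvCoeffVec_dotProduct_momentMatrix_mulVec (hr : r.totalDegree ≤ D) :
    mvCoeffVec D r ⬝ᵥ (momentMatrix D (atomicMoments w z) *ᵥ mvCoeffVec D r) =
      ∑ t, w t * eval ![(z t).1, (z t).2] r ^ 2 := by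
  simp only [dotProduct, momentMatrix_atomicMoments_mulVec w z hr, mul_sum]
  rw [sum_comm]
  refine sum_congr rfl fun t _ => ?_
  have heval := sum_mvCoeffVec_mul_eq_eval hr ![(z t).1, (z t).2]
  simp only [Matrix.cons_val_zero, Matrix.cons_val_one] at heval
  rw [sq, ← heval, mul_sum, mul_sum]
  refine sum_congr rfl fun c _ => ?_
  ring

theorem momentMatrix_atomicMoments_mulVec_eq_zero_iff (hw : ∀ t, 0 < w t)
    (hr : r.totalDegree ≤ D) :
    momentMatrix D (atomicMoments w z) *ᵥ mvCoeffVec D r = 0 ↔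
      ∀ t, eval ![(z t).1, (z t).2] r = 0 := by
  refine ⟨fun h t => ?_, fun h => funext fun c => ?_⟩
  · have hsum := mvCoeffVec_dotProduct_momentMatrix_mulVec w z hr
    rw [h, dotProduct_zero, eq_comm,
      sum_eq_zero_iff_of_nonneg fun t _ => mul_nonneg (hw t).le (sq_nonneg _)] at hsum
    simpa [(hw t).ne'] using hsum t (mem_univ t)
  · simp [momentMatrix_atomicMoments_mulVec w z hr, h]

end AtomicMeasure

/-- For the finitely atomic measure `μ` with support exactly the grid
`{(x_i, y_j)}`, and `P = ∏ (x - x_i)`, `Q = ∏ (y - y_j)`: for every `k ≥ 0` and every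
`r` of degree ≤ d+k, the coefficient vector of `r` lies in `ker M_{d+k}[μ]` iff
`r = uP + vQ` with `deg u, deg v ≤ k`. -/
theorem statement6 (d : ℕ) (hd : 1 ≤ d) (x y : Fin d → ℝ)
    (hx : Function.Injective x) (hy : Function.Injective y)
    (ρ : Fin d → Fin d → ℝ) (hρ : ∀ i j, 0 < ρ i j)
    (μ : Measure (ℝ × ℝ))
    (hμ : μ = ∑ i : Fin d, ∑ j : Fin d,
      ENNReal.ofReal (ρ i j) • Measure.dirac ((x i, y j) : ℝ × ℝ))
    (P Q : MvPolynomial (Fin 2) ℝ)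
    (hP : P = ∏ i : Fin d, (MvPolynomial.X 0 - MvPolynomial.C (x i)))
    (hQ : Q = ∏ j : Fin d, (MvPolynomial.X 1 - MvPolynomial.C (y j)))
    (k : ℕ) (r : MvPolynomial (Fin 2) ℝ) (hr : r.totalDegree ≤ d + k) :
    momentMatrix (d + k) (momentsOf μ) *ᵥ mvCoeffVec (d + k) r = 0 ↔
      ∃ u v : MvPolynomial (Fin 2) ℝ,
        u.totalDegree ≤ k ∧ v.totalDegree ≤ k ∧ r = u * P + v * Q := by
  have hmom : momentsOf μ =
      atomicMoments (fun t : Fin d × Fin d => ρ t.1 t.2) fun t => (x t.1, y t.2) := by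
    rw [hμ, ← Fintype.sum_prod_type']
    exact momentsOf_sum_dirac _ _ fun t => (hρ t.1 t.2).le
  rw [hmom, momentMatrix_atomicMoments_mulVec_eq_zero_iff _
    (fun t : Fin d × Fin d => (x t.1, y t.2)) (fun t => hρ t.1 t.2) hr, Prod.forall]
  have : Nonempty (Fin d) := ⟨⟨0, hd⟩⟩
  have hPS : P = ∏ s ∈ univ.image x, (X 0 - C s) := by rw [hP, prod_image hx.injOn]
  have hQT : Q = ∏ t ∈ univ.image y, (X 1 - C t) := by rw [hQ, prod_image hy.injOn]
  constructor
  · intro hgrid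
    obtain ⟨u, v, hu, hv, hruv⟩ := exists_eq_mul_add_mul_of_eval_eq_zero
      (univ_nonempty.image x) (univ_nonempty.image y) (r := r) (by simpa using hgrid)
    refine ⟨u, v, totalDegree_le_of_prod_X_sub_C_mul_le (hu.trans ?_),
      totalDegree_le_of_prod_X_sub_C_mul_le (hv.trans ?_), by rw [hPS, hQT]; exact hruv⟩
    · rwa [card_image_of_injective _ hx, card_fin]
    · rwa [card_image_of_injective _ hy, card_fin]
  · rintro ⟨u, v, -, -, rfl⟩ i j
    have hP0 : eval ![x i, y j] P = 0 := by
      rw [hP, map_prod]; exact prod_eq_zero (mem_univ i) (by simp)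
    have hQ0 : eval ![x i, y j] Q = 0 := by
      rw [hQ, map_prod]; exact prod_eq_zero (mem_univ j) (by simp)
    simp [hP0, hQ0]
end
end

section
/- Let d ≥ 2, let x_1, …, x_d be distinct reals and y_1, …, y_d be distinct reals, let G = {(x_i, y_j) : 1 ≤ i, j ≤ d} ⊂ ℝ², and let μ be a finitely atomic positive measure on ℝ² whose support is exactly G. Then for every k with 1 ≤ k ≤ d − 1, rank M_{d+k}[μ] = rank M_{d+k−1}[μ] + (d − k − 1). In particular rank M_{2d−1}[μ] = rank M_{2d−2}[μ], while rank M_{d+k}[μ] > rank M_{d+k−1}[μ] for 1 ≤ k ≤ d − 2. -/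
open Finset Matrix

noncomputable section

open MeasureTheory

/-!
The moment matrix of `μ = ∑ ρ_p δ_{z_p}` factors as `Vᵀ diag(ρ) V`, where `V` evaluates the
monomials of degree `≤ n` at the atoms; since `ρ > 0`, `rank M_n[μ] = rank V`, the dimension of
the span of these monomials as functions on the support. On the grid `{x_i} × {y_j}` every
`x^i` is a combination of the `x^a` with `a < d`, `a ≤ i` (Vandermonde), and the `x^a y^b` with
`a, b < d` are linearly independent (Kronecker product of two Vandermonde matrices). Hence
`rank M_n[μ]` counts the pairs `(a, b) ∈ [0, d)²` with `a + b ≤ n`, and going from degree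
`d + k - 1` to `d + k` adds the `d - k - 1` pairs on the antidiagonal `a + b = d + k`.
-/

open Submodule
open scoped Kronecker

theorem Matrix.rank_transpose_mul_diagonal_mul_self {ι n : Type*} [Fintype ι] [DecidableEq ι]
    [Fintype n] (A : Matrix ι n ℝ) (w : ι → ℝ) (hw : ∀ p, 0 < w p) :
    (Aᵀ * diagonal w * A).rank = A.rank := by
  set S : Matrix ι ι ℝ := diagonal fun p => √(w p)
  have hS : IsUnit S.det := by
    simp only [S, det_diagonal, isUnit_iff_ne_zero]
    exact Finset.prod_ne_zero_iff.2 fun p _ => (Real.sqrt_pos.2 (hw p)).ne'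
  have hSS : (S * A)ᵀ * (S * A) = Aᵀ * diagonal w * A := by
    rw [transpose_mul, diagonal_transpose, Matrix.mul_assoc, ← Matrix.mul_assoc S,
      diagonal_mul_diagonal, ← Matrix.mul_assoc]
    simp only [Real.mul_self_sqrt (hw _).le]
  rw [← hSS, rank_transpose_mul_self, rank_mul_eq_right_of_isUnit_det S A hS]

section MomentsOfAtomicMeasure

variable {ι : Type*} [Fintype ι]

theorem momentsOf_sum_smul_dirac (w : ι → ℝ) (hw : ∀ p, 0 ≤ w p) (z : ι → ℝ × ℝ) (i j : ℕ) :
    momentsOf (∑ p, ENNReal.ofReal (w p) • Measure.dirac (z p)) i j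
      = ∑ p, w p * ((z p).1 ^ i * (z p).2 ^ j) := by
  have hint : ∀ p, Integrable (fun z : ℝ × ℝ => z.1 ^ i * z.2 ^ j)
      (ENNReal.ofReal (w p) • Measure.dirac (z p)) := fun p =>
    (integrable_dirac (by finiteness)).smul_measure ENNReal.ofReal_ne_top
  simp only [momentsOf, integral_finsetSum_measure fun p _ => hint p, integral_smul_measure,
    integral_dirac, ENNReal.toReal_ofReal (hw _), smul_eq_mul]

def monomialEvalMatrix {K : Type*} [CommSemiring K] (z : ι → K × K) (n : ℕ) : Matrix ι (Idx n) K :=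
  Matrix.of fun p m => (z p).1 ^ m.1.1 * (z p).2 ^ m.1.2

theorem momentMatrix_eq_transpose_mul_diagonal_mul [DecidableEq ι] (w : ι → ℝ)
    (z : ι → ℝ × ℝ) (n : ℕ) :
    momentMatrix n (fun i j => ∑ p, w p * ((z p).1 ^ i * (z p).2 ^ j))
      = (monomialEvalMatrix z n)ᵀ * diagonal w * monomialEvalMatrix z n := by
  ext r c
  rw [Matrix.mul_apply]
  simp only [momentMatrix, monomialEvalMatrix, Matrix.mul_diagonal, Matrix.transpose_apply,
    Matrix.of_apply, pow_add]
  exact Finset.sum_congr rfl fun p _ => by ring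

theorem rank_momentMatrix_sum_smul_dirac [DecidableEq ι] (w : ι → ℝ) (hw : ∀ p, 0 < w p)
    (z : ι → ℝ × ℝ) (n : ℕ) :
    (momentMatrix n (momentsOf (∑ p, ENNReal.ofReal (w p) • Measure.dirac (z p)))).rank
      = (monomialEvalMatrix z n).rank := by
  have hβ : momentsOf (∑ p, ENNReal.ofReal (w p) • Measure.dirac (z p))
      = fun i j => ∑ p, w p * ((z p).1 ^ i * (z p).2 ^ j) :=
    funext₂ fun i j => momentsOf_sum_smul_dirac w (fun p => (hw p).le) z i j
  rw [hβ, momentMatrix_eq_transpose_mul_diagonal_mul,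
    Matrix.rank_transpose_mul_diagonal_mul_self _ w hw]

end MomentsOfAtomicMeasure

def mulOuter (R ι κ : Type*) [CommSemiring R] : (ι → R) →ₗ[R] (κ → R) →ₗ[R] (ι × κ → R) :=
  LinearMap.mk₂ R (fun u v pq => u pq.1 * v pq.2)
    (fun _ _ _ => funext fun _ => add_mul _ _ _) (fun _ _ _ => funext fun _ => mul_assoc _ _ _)
    (fun _ _ _ => funext fun _ => mul_add _ _ _) (fun _ _ _ => funext fun _ => mul_left_comm _ _ _)

section Grid

variable {K : Type*} [Field K] {m k : ℕ} {x : Fin m → K} {y : Fin k → K}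

theorem linearIndependent_pow_of_injective (hx : Function.Injective x) :
    LinearIndependent K (fun a : Fin m => fun p => x p ^ (a : ℕ)) :=
  (linearIndependent_rows_iff_isUnit (A := (vandermonde x)ᵀ)).2 <| by
    rw [isUnit_iff_isUnit_det, det_transpose, isUnit_iff_ne_zero]
    exact det_vandermonde_ne_zero_iff.2 hx

theorem linearIndependent_pow_mul_pow_of_injective (hx : Function.Injective x)
    (hy : Function.Injective y) :
    LinearIndependent K (fun ab : Fin m × Fin k =>
      fun pq : Fin m × Fin k => x pq.1 ^ (ab.1 : ℕ) * y pq.2 ^ (ab.2 : ℕ)) :=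
  (linearIndependent_rows_iff_isUnit (A := (vandermonde x)ᵀ ⊗ₖ (vandermonde y)ᵀ)).2 <| by
    rw [isUnit_iff_isUnit_det, det_kronecker, det_transpose, det_transpose, isUnit_iff_ne_zero]
    exact mul_ne_zero (pow_ne_zero _ (det_vandermonde_ne_zero_iff.2 hx))
      (pow_ne_zero _ (det_vandermonde_ne_zero_iff.2 hy))

theorem pow_mem_span_pow_le (hx : Function.Injective x) (i : ℕ) :
    (fun p => x p ^ i) ∈
      span K ((fun a : Fin m => fun p => x p ^ (a : ℕ)) '' {a | (a : ℕ) ≤ i}) := by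
  by_cases hi : i < m
  · exact subset_span ⟨⟨i, hi⟩, le_refl i, rfl⟩
  · have hall : {a : Fin m | (a : ℕ) ≤ i} = Set.univ := by
      exact Set.eq_univ_of_forall fun a => (a.2.trans_le (not_lt.1 hi)).le
    rw [hall, Set.image_univ,
      (linearIndependent_pow_of_injective hx).span_eq_top_of_card_eq_finrank' (by simp)]
    trivial

theorem rank_monomialEvalMatrix_grid (hx : Function.Injective x) (hy : Function.Injective y)
    (n : ℕ) :
    (monomialEvalMatrix (fun pq : Fin m × Fin k => (x pq.1, y pq.2)) n).rank
      = Fintype.card {ab : Fin m × Fin k // (ab.1 : ℕ) + ab.2 ≤ n} := by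
  set φ : Fin m × Fin k → Fin m × Fin k → K :=
    fun ab pq => x pq.1 ^ (ab.1 : ℕ) * y pq.2 ^ (ab.2 : ℕ)
  have hcols : span K (Set.range (monomialEvalMatrix (fun pq => (x pq.1, y pq.2)) n).col)
      = span K (Set.range fun t : {ab : Fin m × Fin k // (ab.1 : ℕ) + ab.2 ≤ n} => φ t.1) := by
    apply le_antisymm <;> rw [span_le]
    · rintro _ ⟨c, rfl⟩
      have hc := apply_mem_map₂ (mulOuter K (Fin m) (Fin k))
        (pow_mem_span_pow_le hx c.1.1) (pow_mem_span_pow_le hy c.1.2)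
      rw [map₂_span_span] at hc
      refine span_mono ?_ hc
      rintro _ ⟨_, ⟨a, ha, rfl⟩, _, ⟨b, hb, rfl⟩, rfl⟩
      exact ⟨⟨(a, b), c.2.trans' (add_le_add ha hb)⟩, rfl⟩
    · rintro _ ⟨t, rfl⟩
      exact subset_span ⟨⟨((t.1.1 : ℕ), (t.1.2 : ℕ)), t.2⟩, rfl⟩
  rw [rank_eq_finrank_span_cols, hcols, finrank_span_eq_card]
  exact (linearIndependent_pow_mul_pow_of_injective hx hy).comp _ Subtype.val_injective

end Grid

theorem rank_momentMatrix_grid {m k : ℕ} {x : Fin m → ℝ} {y : Fin k → ℝ}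
    (hx : Function.Injective x) (hy : Function.Injective y) {ρ : Fin m → Fin k → ℝ}
    (hρ : ∀ i j, 0 < ρ i j) (n : ℕ) :
    (momentMatrix n (momentsOf (∑ i, ∑ j,
      ENNReal.ofReal (ρ i j) • Measure.dirac ((x i, y j) : ℝ × ℝ)))).rank
      = Fintype.card {ab : Fin m × Fin k // (ab.1 : ℕ) + ab.2 ≤ n} := by
  rw [← Fintype.sum_prod_type' (f := fun i j =>
      ENNReal.ofReal (ρ i j) • Measure.dirac ((x i, y j) : ℝ × ℝ)),
    rank_momentMatrix_sum_smul_dirac (fun pq : Fin m × Fin k => ρ pq.1 pq.2)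
      (fun pq => hρ pq.1 pq.2) (fun pq => (x pq.1, y pq.2))]
  exact rank_monomialEvalMatrix_grid hx hy n

theorem card_fin_prod_add_le_succ (m k N : ℕ) :
    Fintype.card {ab : Fin m × Fin k // (ab.1 : ℕ) + ab.2 ≤ N + 1}
      = Fintype.card {ab : Fin m × Fin k // (ab.1 : ℕ) + ab.2 ≤ N}
        + Fintype.card {ab : Fin m × Fin k // (ab.1 : ℕ) + ab.2 = N + 1} := by
  rw [← Fintype.card_subtype_or_disjoint]
  · exact Fintype.card_congr (Equiv.subtypeEquivRight fun ab => by omega)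
  · intro r hle heq ab hr
    exact absurd (heq ab hr) (by have := hle ab hr; omega)

theorem card_fin_prod_add_eq_of_le {d e : ℕ} (h : d ≤ e) :
    Fintype.card {ab : Fin d × Fin d // (ab.1 : ℕ) + ab.2 = e} = 2 * d - 1 - e := by
  rw [Fintype.card_subtype]
  calc _ = (Finset.Ico (e + 1 - d) d).card := by
        refine Finset.card_bij' (fun ab _ => (ab.1 : ℕ))
          (fun a ha => (⟨a, (Finset.mem_Ico.1 ha).2⟩,
            ⟨e - a, by have := Finset.mem_Ico.1 ha; omega⟩)) ?_ ?_ ?_ ?_ <;>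
          simp only [Finset.mem_filter, Finset.mem_univ, true_and, Finset.mem_Ico]
        · intro ab hab; omega
        · intro a ha; omega
        · intro ab hab; ext <;> simp only; omega
        · exact fun _ _ => trivial
    _ = 2 * d - 1 - e := by rw [Nat.card_Ico]; omega

/-- For the finitely atomic measure `μ` with support exactly the
`d × d` grid `{(x_i, y_j)}` (d ≥ 2):
`rank M_{d+k}[μ] = rank M_{d+k-1}[μ] + (d - k - 1)` for `1 ≤ k ≤ d - 1`; in particular
`rank M_{2d-1}[μ] = rank M_{2d-2}[μ]`, while `rank M_{d+k}[μ] > rank M_{d+k-1}[μ]` for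
`1 ≤ k ≤ d - 2`. -/
theorem statement7 (d : ℕ) (hd : 2 ≤ d) (x y : Fin d → ℝ)
    (hx : Function.Injective x) (hy : Function.Injective y)
    (ρ : Fin d → Fin d → ℝ) (hρ : ∀ i j, 0 < ρ i j)
    (μ : Measure (ℝ × ℝ))
    (hμ : μ = ∑ i : Fin d, ∑ j : Fin d,
      ENNReal.ofReal (ρ i j) • Measure.dirac ((x i, y j) : ℝ × ℝ)) :
    (∀ k : ℕ, 1 ≤ k → k ≤ d - 1 →
      (momentMatrix (d + k) (momentsOf μ)).rank
        = (momentMatrix (d + k - 1) (momentsOf μ)).rank + (d - k - 1)) ∧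
    (momentMatrix (2 * d - 1) (momentsOf μ)).rank
      = (momentMatrix (2 * d - 2) (momentsOf μ)).rank ∧
    (∀ k : ℕ, 1 ≤ k → k ≤ d - 2 →
      (momentMatrix (d + k - 1) (momentsOf μ)).rank
        < (momentMatrix (d + k) (momentsOf μ)).rank) := by
  have hrank (n : ℕ) : (momentMatrix n (momentsOf μ)).rank
      = Fintype.card {ab : Fin d × Fin d // (ab.1 : ℕ) + ab.2 ≤ n} :=
    hμ ▸ rank_momentMatrix_grid hx hy hρ n
  have hstep (k : ℕ) (hk : 1 ≤ k) : (momentMatrix (d + k) (momentsOf μ)).rank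
      = (momentMatrix (d + k - 1) (momentsOf μ)).rank + (d - k - 1) := by
    have h := card_fin_prod_add_le_succ d d (d + k - 1)
    rw [Nat.sub_add_cancel (by omega), card_fin_prod_add_eq_of_le (Nat.le_add_right d k)] at h
    rw [hrank, hrank, h]
    omega
  refine ⟨fun k hk _ => hstep k hk, ?_, fun k hk hkd => ?_⟩
  · have h := hstep (d - 1) (by omega)
    rwa [show d + (d - 1) = 2 * d - 1 by omega, show 2 * d - 1 - 1 = 2 * d - 2 by omega,
      show d - (d - 1) - 1 = 0 by omega, add_zero] at h
  · have := hstep k hk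
    omega
end
end
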